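/- arXiv:1412.6089 — 12 statements merged into one kernel-verified Lean document; each statement's English description precedes it below -/
import Mathlib

section
/- Let A, α ∈ ℝ with cos(Aπ) ≠ 0, and let k > 0 with k ∉ ℤ. Then |ξ(k)| ≤ 1 if and only if there exist θ ∈ ℝ and complex constants C_L⁺, C_L⁻, C_R⁺, C_R⁻, D_L⁺, D_L⁻, D_R⁺, D_R⁻, not all zero, such that the functions ψ_L(x) = e^{−iAx}(C_L⁺e^{ikx} + C_L⁻e^{−ikx}), ψ_R(x) = e^{−iAx}(C_R⁺e^{ikx} + C_R⁻e^{−ikx}), φ_L(x) = e^{iAx}(D_L⁺e^{ikx} + D_L⁻e^{−ikx}), φ_R(x) = e^{iAx}(D_R⁺e^{ikx} + D_R⁻e^{−ikx}) satisfy all of the conditions: ψ_L(0) = ψ_R(0) = φ_L(0) = φ_R(0); −ψ_L′(0) + ψ_R′(0) − φ_L′(0) + φ_R′(0) = α·ψ_L(0); ψ_R(π/2) = e^{iθ}ψ_L(−π/2); ψ_R′(π/2) = e^{iθ}ψ_L′(−π/2); φ_R(π/2) = e^{iθ}φ_L(−π/2); φ_R′(π/2) = e^{iθ}φ_L′(−π/2).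 -/
open scoped Real

/-- A wave-function component `x ↦ e^{iBx}(C⁺ e^{ikx} + C⁻ e^{−ikx})`. -/
noncomputable def planeWave (B k : ℝ) (Cp Cm : ℂ) : ℝ → ℂ :=
  fun x => Complex.exp (Complex.I * (B * x : ℝ)) *
    (Cp * Complex.exp (Complex.I * (k * x : ℝ)) + Cm * Complex.exp (-(Complex.I * (k * x : ℝ))))

lemma pw_apply (B k : ℝ) (Cp Cm : ℂ) (x : ℝ) :
    planeWave B k Cp Cm x
      = Cp * Complex.exp (Complex.I * ((B : ℂ) + (k : ℂ)) * (x : ℂ))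
        + Cm * Complex.exp (Complex.I * ((B : ℂ) - (k : ℂ)) * (x : ℂ)) := by
  have e1 : Complex.exp (Complex.I * ((B * x : ℝ) : ℂ)) * Complex.exp (Complex.I * ((k * x : ℝ) : ℂ))
      = Complex.exp (Complex.I * ((B : ℂ) + (k : ℂ)) * (x : ℂ)) := by
    rw [← Complex.exp_add]; congr 1; push_cast; ring
  have e2 : Complex.exp (Complex.I * ((B * x : ℝ) : ℂ)) * Complex.exp (-(Complex.I * ((k * x : ℝ) : ℂ)))
      = Complex.exp (Complex.I * ((B : ℂ) - (k : ℂ)) * (x : ℂ)) := by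
    rw [← Complex.exp_add]; congr 1; push_cast; ring
  calc planeWave B k Cp Cm x
      = Cp * (Complex.exp (Complex.I * ((B * x : ℝ) : ℂ)) * Complex.exp (Complex.I * ((k * x : ℝ) : ℂ)))
        + Cm * (Complex.exp (Complex.I * ((B * x : ℝ) : ℂ)) * Complex.exp (-(Complex.I * ((k * x : ℝ) : ℂ)))) := by
        simp only [planeWave]; ring
    _ = _ := by rw [e1, e2]

lemma cexp_aux (μ c : ℂ) (x : ℝ) :
    HasDerivAt (fun y : ℝ => c * Complex.exp (Complex.I * μ * (y : ℂ)))
      (Complex.I * μ * c * Complex.exp (Complex.I * μ * (x : ℂ))) x := by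
  have h : HasDerivAt (fun z : ℂ => c * Complex.exp (Complex.I * μ * z))
      (c * (Complex.exp (Complex.I * μ * (x : ℂ)) * (Complex.I * μ * 1))) (x : ℂ) :=
    (((hasDerivAt_id ((x : ℝ) : ℂ)).const_mul (Complex.I * μ)).cexp).const_mul c
  have h2 := h.comp_ofReal
  convert h2 using 1
  ring

lemma pw_hasDerivAt (B k : ℝ) (Cp Cm : ℂ) (x : ℝ) :
    HasDerivAt (planeWave B k Cp Cm)
      (Complex.I * ((B : ℂ) + (k : ℂ)) * Cp * Complex.exp (Complex.I * ((B : ℂ) + (k : ℂ)) * (x : ℂ))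
        + Complex.I * ((B : ℂ) - (k : ℂ)) * Cm * Complex.exp (Complex.I * ((B : ℂ) - (k : ℂ)) * (x : ℂ))) x := by
  have hfun : planeWave B k Cp Cm = fun y : ℝ =>
      Cp * Complex.exp (Complex.I * ((B : ℂ) + (k : ℂ)) * (y : ℂ))
        + Cm * Complex.exp (Complex.I * ((B : ℂ) - (k : ℂ)) * (y : ℂ)) :=
    funext (pw_apply B k Cp Cm)
  rw [hfun]
  exact (cexp_aux ((B : ℂ) + (k : ℂ)) Cp x).add (cexp_aux ((B : ℂ) - (k : ℂ)) Cm x)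

lemma pw_deriv (B k : ℝ) (Cp Cm : ℂ) (x : ℝ) :
    deriv (planeWave B k Cp Cm) x
      = Complex.I * ((B : ℂ) + (k : ℂ)) * Cp * Complex.exp (Complex.I * ((B : ℂ) + (k : ℂ)) * (x : ℂ))
        + Complex.I * ((B : ℂ) - (k : ℂ)) * Cm * Complex.exp (Complex.I * ((B : ℂ) - (k : ℂ)) * (x : ℂ)) :=
  (pw_hasDerivAt B k Cp Cm x).deriv

lemma pw_zero (B k : ℝ) (Cp Cm : ℂ) : planeWave B k Cp Cm 0 = Cp + Cm := by
  simp [planeWave]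

lemma pw_deriv_zero (B k : ℝ) (Cp Cm : ℂ) :
    deriv (planeWave B k Cp Cm) 0
      = Complex.I * ((B : ℂ) + (k : ℂ)) * Cp + Complex.I * ((B : ℂ) - (k : ℂ)) * Cm := by
  rw [pw_deriv]; push_cast; simp

/-- `|ξ(k)| ≤ 1` iff the Floquet boundary-value problem on the elementary cell
admits a nontrivial solution. -/
theorem xi_le_one_iff_floquet_solution (A α : ℝ) (hA : Real.cos (A * π) ≠ 0)
    (k : ℝ) (hk : 0 < k) (hkZ : ∀ n : ℤ, k ≠ (n : ℝ)) :
    |(1 / Real.cos (A * π)) * (Real.cos (k * π) + α / (4 * k) * Real.sin (k * π))| ≤ 1 ↔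
    ∃ (θ : ℝ) (CLp CLm CRp CRm DLp DLm DRp DRm : ℂ),
      ¬(CLp = 0 ∧ CLm = 0 ∧ CRp = 0 ∧ CRm = 0 ∧
        DLp = 0 ∧ DLm = 0 ∧ DRp = 0 ∧ DRm = 0) ∧
      -- continuity at the central vertex
      planeWave (-A) k CLp CLm 0 = planeWave (-A) k CRp CRm 0 ∧
      planeWave (-A) k CRp CRm 0 = planeWave A k DLp DLm 0 ∧
      planeWave A k DLp DLm 0 = planeWave A k DRp DRm 0 ∧
      -- δ-coupling at the central vertex
      -(deriv (planeWave (-A) k CLp CLm) 0) + deriv (planeWave (-A) k CRp CRm) 0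
        - deriv (planeWave A k DLp DLm) 0 + deriv (planeWave A k DRp DRm) 0
        = (α : ℂ) * planeWave (-A) k CLp CLm 0 ∧
      -- Floquet conditions at the cell boundary
      planeWave (-A) k CRp CRm (π / 2)
        = Complex.exp (Complex.I * (θ : ℝ)) * planeWave (-A) k CLp CLm (-(π / 2)) ∧
      deriv (planeWave (-A) k CRp CRm) (π / 2)
        = Complex.exp (Complex.I * (θ : ℝ)) * deriv (planeWave (-A) k CLp CLm) (-(π / 2)) ∧
      planeWave A k DRp DRm (π / 2)
        = Complex.exp (Complex.I * (θ : ℝ)) * planeWave A k DLp DLm (-(π / 2)) ∧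
      deriv (planeWave A k DRp DRm) (π / 2)
        = Complex.exp (Complex.I * (θ : ℝ)) * deriv (planeWave A k DLp DLm) (-(π / 2)) := by
  have hkne : k ≠ 0 := ne_of_gt hk
  have hKC : (k : ℂ) ≠ 0 := Complex.ofReal_ne_zero.mpr hkne
  set ck := Real.cos (k * π) with hck_def
  set sk := Real.sin (k * π) with hsk_def
  set cA := Real.cos (A * π) with hcA_def
  set sA := Real.sin (A * π) with hsA_def
  have hsk0 : sk ≠ 0 := by
    rw [hsk_def]
    intro h
    rcases Real.sin_eq_zero_iff.mp h with ⟨n, hn⟩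
    exact hkZ n ((mul_right_cancel₀ Real.pi_ne_zero hn).symm)
  set q : ℂ := Complex.exp (Complex.I * (k : ℂ) * ((π : ℝ) : ℂ)) with hq_def
  set s : ℂ := Complex.exp (Complex.I * (A : ℂ) * ((π : ℝ) : ℂ)) with hs_def
  set W : ℂ := Complex.exp (Complex.I * ((A : ℂ) + (k : ℂ)) * (((π : ℝ) : ℂ) / 2)) with hW_def
  have hq0 : q ≠ 0 := by rw [hq_def]; exact Complex.exp_ne_zero _
  have hs0 : s ≠ 0 := by rw [hs_def]; exact Complex.exp_ne_zero _
  have hW0 : W ≠ 0 := by rw [hW_def]; exact Complex.exp_ne_zero _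
  have hpk : (ck : ℂ) ^ 2 + (sk : ℂ) ^ 2 = 1 := by
    rw [hck_def, hsk_def]
    exact_mod_cast Real.cos_sq_add_sin_sq (k * π)
  have hpA : (cA : ℂ) ^ 2 + (sA : ℂ) ^ 2 = 1 := by
    rw [hcA_def, hsA_def]
    exact_mod_cast Real.cos_sq_add_sin_sq (A * π)
  have hqcs : q = (ck : ℂ) + (sk : ℂ) * Complex.I := by
    rw [hq_def, show Complex.I * (k : ℂ) * ((π : ℝ) : ℂ) = ((k * π : ℝ) : ℂ) * Complex.I from by
      push_cast; ring, Complex.exp_mul_I, ← Complex.ofReal_cos, ← Complex.ofReal_sin,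
      hck_def, hsk_def]
  have hscs : s = (cA : ℂ) + (sA : ℂ) * Complex.I := by
    rw [hs_def, show Complex.I * (A : ℂ) * ((π : ℝ) : ℂ) = ((A * π : ℝ) : ℂ) * Complex.I from by
      push_cast; ring, Complex.exp_mul_I, ← Complex.ofReal_cos, ← Complex.ofReal_sin,
      hcA_def, hsA_def]
  have hq2 : q ^ 2 - 1 = q * (2 * (sk : ℂ) * Complex.I) := by
    rw [hqcs]; linear_combination hpk - (sk : ℂ) ^ 2 * Complex.I_sq
  have hq2ne : q ^ 2 - 1 ≠ 0 := by
    rw [hq2]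
    exact mul_ne_zero hq0 (mul_ne_zero (mul_ne_zero two_ne_zero
      (Complex.ofReal_ne_zero.mpr hsk0)) Complex.I_ne_zero)
  -- exponential product identities
  have eqc1 : Complex.exp (Complex.I * (-(A : ℂ) + (k : ℂ)) * (((π : ℝ) : ℂ) / 2)) * W = q := by
    rw [hW_def, hq_def, ← Complex.exp_add]; congr 1; ring
  have eqc2 : Complex.exp (Complex.I * (-(A : ℂ) - (k : ℂ)) * (((π : ℝ) : ℂ) / 2)) * W = 1 := by
    rw [hW_def, ← Complex.exp_add, show Complex.I * (-(A : ℂ) - (k : ℂ)) * (((π : ℝ) : ℂ) / 2)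
      + Complex.I * ((A : ℂ) + (k : ℂ)) * (((π : ℝ) : ℂ) / 2) = 0 from by ring, Complex.exp_zero]
  have eqc3 : Complex.exp (Complex.I * (-(A : ℂ) + (k : ℂ)) * (-(((π : ℝ) : ℂ) / 2))) * W = s := by
    rw [hW_def, hs_def, ← Complex.exp_add]; congr 1; ring
  have eqc4 : Complex.exp (Complex.I * (-(A : ℂ) - (k : ℂ)) * (-(((π : ℝ) : ℂ) / 2))) * W = s * q := by
    rw [hW_def, hs_def, hq_def, ← Complex.exp_add, ← Complex.exp_add]; congr 1; ring
  have eqd1 : Complex.exp (Complex.I * ((A : ℂ) + (k : ℂ)) * (((π : ℝ) : ℂ) / 2)) * W = s * q := by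
    rw [hW_def, hs_def, hq_def, ← Complex.exp_add, ← Complex.exp_add]; congr 1; ring
  have eqd2 : Complex.exp (Complex.I * ((A : ℂ) - (k : ℂ)) * (((π : ℝ) : ℂ) / 2)) * W = s := by
    rw [hW_def, hs_def, ← Complex.exp_add]; congr 1; ring
  have eqd3 : Complex.exp (Complex.I * ((A : ℂ) + (k : ℂ)) * (-(((π : ℝ) : ℂ) / 2))) * W = 1 := by
    rw [hW_def, ← Complex.exp_add, show Complex.I * ((A : ℂ) + (k : ℂ)) * (-(((π : ℝ) : ℂ) / 2))
      + Complex.I * ((A : ℂ) + (k : ℂ)) * (((π : ℝ) : ℂ) / 2) = 0 from by ring, Complex.exp_zero]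
  have eqd4 : Complex.exp (Complex.I * ((A : ℂ) - (k : ℂ)) * (-(((π : ℝ) : ℂ) / 2))) * W = q := by
    rw [hW_def, hq_def, ← Complex.exp_add]; congr 1; ring
  -- the dispersion factorization
  have hfact : ∀ θ : ℝ,
      2 * (k : ℂ) * q * (s ^ 2 + 1) * ((Complex.exp (Complex.I * (θ : ℝ))) ^ 2 + 1)
        - 4 * (k : ℂ) * (Complex.exp (Complex.I * (θ : ℝ))) * s * (q ^ 2 + 1)
        + Complex.I * (α : ℂ) * (Complex.exp (Complex.I * (θ : ℝ))) * s * (q ^ 2 - 1)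
      = Complex.exp (Complex.I * (θ : ℝ)) * s * q
          * (((8 * k * (cA * Real.cos θ) - 8 * k * ck - 2 * α * sk : ℝ)) : ℂ) := by
    intro θ
    set T := Complex.exp (Complex.I * ((θ : ℝ) : ℂ)) with hTd
    have hT : T = ((Real.cos θ : ℝ) : ℂ) + ((Real.sin θ : ℝ) : ℂ) * Complex.I := by
      rw [hTd, show Complex.I * ((θ : ℝ) : ℂ) = ((θ : ℝ) : ℂ) * Complex.I from mul_comm _ _,
        Complex.exp_mul_I, ← Complex.ofReal_cos, ← Complex.ofReal_sin]
    have hpt : ((Real.cos θ : ℝ) : ℂ) ^ 2 + ((Real.sin θ : ℝ) : ℂ) ^ 2 = 1 := by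
      exact_mod_cast Real.cos_sq_add_sin_sq θ
    set q' : ℂ := (ck : ℂ) - (sk : ℂ) * Complex.I with hq'd
    set s' : ℂ := (cA : ℂ) - (sA : ℂ) * Complex.I with hs'd
    set t' : ℂ := ((Real.cos θ : ℝ) : ℂ) - ((Real.sin θ : ℝ) : ℂ) * Complex.I with ht'd
    have hqq' : q * q' = 1 := by
      rw [hqcs, hq'd]; linear_combination hpk - (sk : ℂ) ^ 2 * Complex.I_sq
    have hss' : s * s' = 1 := by
      rw [hscs, hs'd]; linear_combination hpA - (sA : ℂ) ^ 2 * Complex.I_sq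
    have htt' : T * t' = 1 := by
      rw [hT, ht'd]; linear_combination hpt - ((Real.sin θ : ℝ) : ℂ) ^ 2 * Complex.I_sq
    have step : 2 * (k : ℂ) * q * (s ^ 2 + 1) * (T ^ 2 + 1)
        - 4 * (k : ℂ) * T * s * (q ^ 2 + 1)
        + Complex.I * (α : ℂ) * T * s * (q ^ 2 - 1)
        = T * s * q * (2 * (k : ℂ) * ((s + s') * (T + t')) - 4 * (k : ℂ) * (q + q')
            + Complex.I * (α : ℂ) * (q - q')) := by
      linear_combination ((4 : ℂ) * s * T * (k : ℂ) + Complex.I * s * T * (α : ℂ)) * hqq'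
        + ((-2 : ℂ) * q * T * t' * (k : ℂ) + (-2 : ℂ) * q * T ^ 2 * (k : ℂ)) * hss'
        + ((-2 : ℂ) * q * (k : ℂ) + (-2 : ℂ) * q * s ^ 2 * (k : ℂ)) * htt'
    have hsum_s : s + s' = 2 * (cA : ℂ) := by rw [hscs, hs'd]; ring
    have hsum_t : T + t' = 2 * ((Real.cos θ : ℝ) : ℂ) := by rw [hT, ht'd]; ring
    have hsum_q : q + q' = 2 * (ck : ℂ) := by rw [hqcs, hq'd]; ring
    have hdif_q : q - q' = 2 * (sk : ℂ) * Complex.I := by rw [hqcs, hq'd]; ring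
    rw [step, hsum_s, hsum_t, hsum_q, hdif_q]
    push_cast
    linear_combination (T * s * q * 2 * (α : ℂ) * (sk : ℂ)) * Complex.I_sq
  constructor
  · -- forward direction
    intro hξ
    have hb := abs_le.mp hξ
    set θv := Real.arccos (1 / cA * (ck + α / (4 * k) * sk)) with hθv
    have hcθ : Real.cos θv = 1 / cA * (ck + α / (4 * k) * sk) := Real.cos_arccos hb.1 hb.2
    set T := Complex.exp (Complex.I * ((θv : ℝ) : ℂ)) with hT_def
    have hT0 : T ≠ 0 := by rw [hT_def]; exact Complex.exp_ne_zero _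
    have hρv : 8 * k * (cA * Real.cos θv) - 8 * k * ck - 2 * α * sk = 0 := by
      rw [hcθ]
      field_simp
      ring
    have hRp0 : 2 * (k : ℂ) * q * (s ^ 2 + 1) * (T ^ 2 + 1)
        - 4 * (k : ℂ) * T * s * (q ^ 2 + 1)
        + Complex.I * (α : ℂ) * T * s * (q ^ 2 - 1) = 0 := by
      have h2 := hfact θv
      rw [← hT_def] at h2
      rw [h2, show ((8 * k * (cA * Real.cos θv) - 8 * k * ck - 2 * α * sk : ℝ) : ℂ) = 0 from by
        exact_mod_cast hρv, mul_zero]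
    refine ⟨θv, s * q ^ 2 * (T * s * q - 1), s * q * (q - T * s),
      T * s ^ 2 * q * (T * s * q - 1), T * s ^ 2 * q ^ 2 * (q - T * s),
      s ^ 2 * q ^ 2 * (T * q - s), s ^ 2 * q * (s * q - T),
      T * s * q * (T * q - s), T * s * q ^ 2 * (s * q - T),
      ?_, ?_, ?_, ?_, ?_, ?_, ?_, ?_, ?_⟩
    · rintro ⟨h1, h2, -, -, -, -, -, -⟩
      have e1 : T * s * q - 1 = 0 :=
        (mul_eq_zero.mp h1).resolve_left (mul_ne_zero hs0 (pow_ne_zero 2 hq0))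
      have e2 : q - T * s = 0 :=
        (mul_eq_zero.mp h2).resolve_left (mul_ne_zero hs0 hq0)
      exact hq2ne (by linear_combination q * e2 + e1)
    · simp only [pw_zero]; ring
    · simp only [pw_zero]; ring
    · simp only [pw_zero]; ring
    · simp only [pw_deriv_zero, pw_zero]
      push_cast
      linear_combination (Complex.I * s * q) * hRp0
        + (q * s ^ 2 * T * (α : ℂ) - q ^ 3 * s ^ 2 * T * (α : ℂ)) * Complex.I_sq
    · simp only [pw_apply]
      push_cast
      rw [← hT_def]
      refine mul_right_cancel₀ hW0 ?_
      linear_combination (T * s ^ 2 * q * (T * s * q - 1)) * eqc1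
        + (T * s ^ 2 * q ^ 2 * (q - T * s)) * eqc2
        - T * (s * q ^ 2 * (T * s * q - 1)) * eqc3
        - T * (s * q * (q - T * s)) * eqc4
    · simp only [pw_deriv]
      push_cast
      rw [← hT_def]
      refine mul_right_cancel₀ hW0 ?_
      linear_combination (Complex.I * (-(A : ℂ) + (k : ℂ)) * (T * s ^ 2 * q * (T * s * q - 1))) * eqc1
        + (Complex.I * (-(A : ℂ) - (k : ℂ)) * (T * s ^ 2 * q ^ 2 * (q - T * s))) * eqc2
        - T * (Complex.I * (-(A : ℂ) + (k : ℂ)) * (s * q ^ 2 * (T * s * q - 1))) * eqc3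
        - T * (Complex.I * (-(A : ℂ) - (k : ℂ)) * (s * q * (q - T * s))) * eqc4
    · simp only [pw_apply]
      push_cast
      rw [← hT_def]
      refine mul_right_cancel₀ hW0 ?_
      linear_combination (T * s * q * (T * q - s)) * eqd1
        + (T * s * q ^ 2 * (s * q - T)) * eqd2
        - T * (s ^ 2 * q ^ 2 * (T * q - s)) * eqd3
        - T * (s ^ 2 * q * (s * q - T)) * eqd4
    · simp only [pw_deriv]
      push_cast
      rw [← hT_def]
      refine mul_right_cancel₀ hW0 ?_
      linear_combination (Complex.I * ((A : ℂ) + (k : ℂ)) * (T * s * q * (T * q - s))) * eqd1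
        + (Complex.I * ((A : ℂ) - (k : ℂ)) * (T * s * q ^ 2 * (s * q - T))) * eqd2
        - T * (Complex.I * ((A : ℂ) + (k : ℂ)) * (s ^ 2 * q ^ 2 * (T * q - s))) * eqd3
        - T * (Complex.I * ((A : ℂ) - (k : ℂ)) * (s ^ 2 * q * (s * q - T))) * eqd4
  · -- backward direction
    rintro ⟨θ, CLp, CLm, CRp, CRm, DLp, DLm, DRp, DRm, hnt, hc1, hc2, hc3, hδ, hf1, hf2, hf3, hf4⟩
    simp only [pw_zero] at hc1 hc2 hc3
    simp only [pw_deriv_zero, pw_zero] at hδ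
    simp only [pw_apply] at hf1 hf3
    simp only [pw_deriv] at hf2 hf4
    push_cast at hδ hf1 hf2 hf3 hf4
    set T := Complex.exp (Complex.I * ((θ : ℝ) : ℂ)) with hT_def
    have hT0 : T ≠ 0 := by rw [hT_def]; exact Complex.exp_ne_zero _
    have h5' : CRp * q + CRm = T * (CLp * s + CLm * (s * q)) := by
      linear_combination W * hf1 - CRp * eqc1 - CRm * eqc2 + T * CLp * eqc3 + T * CLm * eqc4
    have h6' : Complex.I * (-(A : ℂ) + (k : ℂ)) * CRp * q + Complex.I * (-(A : ℂ) - (k : ℂ)) * CRm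
        = T * (Complex.I * (-(A : ℂ) + (k : ℂ)) * CLp * s
            + Complex.I * (-(A : ℂ) - (k : ℂ)) * CLm * (s * q)) := by
      linear_combination W * hf2 - (Complex.I * (-(A : ℂ) + (k : ℂ))) * CRp * eqc1
        - (Complex.I * (-(A : ℂ) - (k : ℂ))) * CRm * eqc2
        + T * (Complex.I * (-(A : ℂ) + (k : ℂ))) * CLp * eqc3
        + T * (Complex.I * (-(A : ℂ) - (k : ℂ))) * CLm * eqc4
    have h7' : DRp * (s * q) + DRm * s = T * (DLp + DLm * q) := by
      linear_combination W * hf3 - DRp * eqd1 - DRm * eqd2 + T * DLp * eqd3 + T * DLm * eqd4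
    have h8' : Complex.I * ((A : ℂ) + (k : ℂ)) * DRp * (s * q) + Complex.I * ((A : ℂ) - (k : ℂ)) * DRm * s
        = T * (Complex.I * ((A : ℂ) + (k : ℂ)) * DLp + Complex.I * ((A : ℂ) - (k : ℂ)) * DLm * q) := by
      linear_combination W * hf4 - (Complex.I * ((A : ℂ) + (k : ℂ))) * DRp * eqd1
        - (Complex.I * ((A : ℂ) - (k : ℂ))) * DRm * eqd2
        + T * (Complex.I * ((A : ℂ) + (k : ℂ))) * DLp * eqd3
        + T * (Complex.I * ((A : ℂ) - (k : ℂ))) * DLm * eqd4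
    have h2IK : (2 : ℂ) * Complex.I * (k : ℂ) ≠ 0 :=
      mul_ne_zero (mul_ne_zero two_ne_zero Complex.I_ne_zero) hKC
    have G5 : q * CRp = T * s * CLp := by
      have e : (2 : ℂ) * Complex.I * (k : ℂ) * (q * CRp - T * s * CLp) = 0 := by
        linear_combination (Complex.I * (k : ℂ) + Complex.I * (A : ℂ)) * h5' + h6'
      exact sub_eq_zero.mp ((mul_eq_zero.mp e).resolve_left h2IK)
    have G6 : CRm = T * s * q * CLm := by
      have e : (2 : ℂ) * Complex.I * (k : ℂ) * (CRm - T * s * q * CLm) = 0 := by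
        linear_combination (Complex.I * (k : ℂ) - Complex.I * (A : ℂ)) * h5' - h6'
      exact sub_eq_zero.mp ((mul_eq_zero.mp e).resolve_left h2IK)
    have G7 : s * q * DRp = T * DLp := by
      have e : (2 : ℂ) * Complex.I * (k : ℂ) * (s * q * DRp - T * DLp) = 0 := by
        linear_combination (Complex.I * (k : ℂ) - Complex.I * (A : ℂ)) * h7' + h8'
      exact sub_eq_zero.mp ((mul_eq_zero.mp e).resolve_left h2IK)
    have G8 : s * DRm = T * q * DLm := by
      have e : (2 : ℂ) * Complex.I * (k : ℂ) * (s * DRm - T * q * DLm) = 0 := by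
        linear_combination (Complex.I * (k : ℂ) + Complex.I * (A : ℂ)) * h7' - h8'
      exact sub_eq_zero.mp ((mul_eq_zero.mp e).resolve_left h2IK)
    have hσ : CLp + CLm = DLp + DLm := by linear_combination hc1 + hc2
    have H4 : Complex.I * (k : ℂ) * (CRp - CLp) - Complex.I * (k : ℂ) * (CRm - CLm)
        + Complex.I * (k : ℂ) * (DRp - DLp) - Complex.I * (k : ℂ) * (DRm - DLm)
        = (α : ℂ) * (CLp + CLm) := by
      linear_combination hδ - Complex.I * (A : ℂ) * hc1 + Complex.I * (A : ℂ) * hc3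
    have Gm : T * s * (q ^ 2 - 1) * CLm = (q - T * s) * (CLp + CLm) := by
      linear_combination (-q) * hc1 - G5 - q * G6
    have GM : T * (q ^ 2 - 1) * DLm = (s * q - T) * (CLp + CLm) := by
      linear_combination (-(s * q)) * hc3 - G7 - q * G8 - (s * q - T) * hσ
    have key : (2 * (k : ℂ) * q * (s ^ 2 + 1) * (T ^ 2 + 1)
        - 4 * (k : ℂ) * T * s * (q ^ 2 + 1)
        + Complex.I * (α : ℂ) * T * s * (q ^ 2 - 1)) * ((CLp + CLm) * (Complex.I * s * q)) = 0 := by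
      linear_combination (T * s * (q ^ 2 - 1) * q * s) * H4
        - (T * s * (q ^ 2 - 1) * Complex.I * (k : ℂ) * s) * G5
        + (T * s * (q ^ 2 - 1) * Complex.I * (k : ℂ) * q * s) * G6
        - (T * s * (q ^ 2 - 1) * Complex.I * (k : ℂ)) * G7
        + (T * s * (q ^ 2 - 1) * Complex.I * (k : ℂ) * q) * G8
        + (Complex.I * (k : ℂ) * s * (T * s * (q ^ 2 + 1) - 2 * q)) * Gm
        + (s * (Complex.I * (k : ℂ) * (T * (q ^ 2 + 1) - 2 * q * s))) * GM
        + (T * s * (q ^ 2 - 1) * Complex.I * (k : ℂ) * (T - q * s)) * hσ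
        + (q * s ^ 2 * T * (α : ℂ) * (q ^ 2 - 1) * (CLp + CLm)) * Complex.I_sq
    have hσ0 : CLp + CLm ≠ 0 := by
      intro h0
      have hTs : T * s * (q ^ 2 - 1) ≠ 0 := mul_ne_zero (mul_ne_zero hT0 hs0) hq2ne
      have hm0 : CLm = 0 := by
        have e := Gm
        rw [h0, mul_zero] at e
        exact (mul_eq_zero.mp e).resolve_left hTs
      have hp0 : CLp = 0 := by rw [hm0, add_zero] at h0; exact h0
      have hM0 : DLm = 0 := by
        have e := GM
        rw [h0, mul_zero] at e
        exact (mul_eq_zero.mp e).resolve_left (mul_ne_zero hT0 hq2ne)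
      have hP0 : DLp = 0 := by
        have e := hσ.symm
        rw [hM0, add_zero, h0] at e
        exact e
      have hp2 : CRp = 0 := by
        have e := G5
        rw [hp0, mul_zero] at e
        exact (mul_eq_zero.mp e).resolve_left hq0
      have hm2 : CRm = 0 := by
        have e := G6
        rw [hm0, mul_zero] at e
        exact e
      have hP2 : DRp = 0 := by
        have e := G7
        rw [hP0, mul_zero] at e
        exact (mul_eq_zero.mp e).resolve_left (mul_ne_zero hs0 hq0)
      have hM2 : DRm = 0 := by
        have e := G8
        rw [hM0, mul_zero] at e
        exact (mul_eq_zero.mp e).resolve_left hs0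
      exact hnt ⟨hp0, hm0, hp2, hm2, hP0, hM0, hP2, hM2⟩
    have hRp0 : 2 * (k : ℂ) * q * (s ^ 2 + 1) * (T ^ 2 + 1)
        - 4 * (k : ℂ) * T * s * (q ^ 2 + 1)
        + Complex.I * (α : ℂ) * T * s * (q ^ 2 - 1) = 0 :=
      (mul_eq_zero.mp key).resolve_right
        (mul_ne_zero hσ0 (mul_ne_zero (mul_ne_zero Complex.I_ne_zero hs0) hq0))
    have h2 := hfact θ
    rw [← hT_def] at h2
    rw [h2] at hRp0
    have hρc : ((8 * k * (cA * Real.cos θ) - 8 * k * ck - 2 * α * sk : ℝ) : ℂ) = 0 :=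
      (mul_eq_zero.mp hRp0).resolve_left (mul_ne_zero (mul_ne_zero hT0 hs0) hq0)
    have hρ : 8 * k * (cA * Real.cos θ) - 8 * k * ck - 2 * α * sk = 0 := by exact_mod_cast hρc
    have hfin : 1 / cA * (ck + α / (4 * k) * sk) = Real.cos θ := by
      field_simp
      linear_combination (-1 / 2 : ℝ) * hρ
    rw [hfin]
    exact Real.abs_cos_le_one θ
end

section
/- Let A, α ∈ ℝ with 0 < |cos(Aπ)| < 1, and let n be a positive integer. Then the set S_n = {k ∈ [n, n+1] : |cos(kπ) + (α/(4k))·sin(kπ)| ≤ |cos(Aπ)|} is nonempty and contains neither endpoint, i.e. S_n ⊆ (n, n+1). Consequently each spectral band {k² : k ∈ S_n} is a nonempty subset of the open interval (n², (n+1)²). -/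
open scoped Real

/-- The set of momenta `k ∈ [n, n+1]` satisfying the band condition
`|cos(kπ) + (α/(4k))·sin(kπ)| ≤ |cos(Aπ)|`. -/
def bandSet (A α : ℝ) (n : ℕ) : Set ℝ :=
  {k : ℝ | k ∈ Set.Icc (n : ℝ) ((n : ℝ) + 1) ∧
    |Real.cos (k * π) + α / (4 * k) * Real.sin (k * π)| ≤ |Real.cos (A * π)|}

lemma band_fun_nat (α : ℝ) (m : ℕ) :
    Real.cos ((m : ℝ) * π) + α / (4 * (m : ℝ)) * Real.sin ((m : ℝ) * π)
      = (-1 : ℝ) ^ m := by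
  rw [Real.sin_nat_mul_pi, mul_zero, add_zero]
  have := Real.cos_nat_mul_pi_sub 0 m
  simpa using this

/-- for `0 < |cos Aπ| < 1` and `n ≥ 1` the band set `S_n` is nonempty and
contained in the open interval `(n, n+1)`, so the spectral band `{k² : k ∈ S_n}` is a
nonempty subset of `(n², (n+1)²)`. -/
theorem band_in_open_interval (A α : ℝ) (h0 : 0 < |Real.cos (A * π)|)
    (h1 : |Real.cos (A * π)| < 1) (n : ℕ) (hn : 0 < n) :
    (bandSet A α n).Nonempty ∧
    bandSet A α n ⊆ Set.Ioo (n : ℝ) ((n : ℝ) + 1) ∧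
    ((fun k : ℝ => k ^ 2) '' bandSet A α n).Nonempty ∧
    (fun k : ℝ => k ^ 2) '' bandSet A α n ⊆ Set.Ioo ((n : ℝ) ^ 2) (((n : ℝ) + 1) ^ 2) := by
  set f : ℝ → ℝ := fun k => Real.cos (k * π) + α / (4 * k) * Real.sin (k * π) with hf
  have hnpos : (0 : ℝ) < n := by exact_mod_cast hn
  have hle : (n : ℝ) ≤ (n : ℝ) + 1 := by linarith
  -- continuity of f on [n, n+1]
  have hcont : ContinuousOn f (Set.Icc (n : ℝ) ((n : ℝ) + 1)) := by
    apply ContinuousOn.add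
    · exact (Real.continuous_cos.comp (continuous_id.mul continuous_const)).continuousOn
    · apply ContinuousOn.mul
      · apply ContinuousOn.div continuousOn_const
        · exact (continuous_const.mul continuous_id).continuousOn
        · intro x hx
          have : (0 : ℝ) < x := lt_of_lt_of_le hnpos hx.1
          positivity
      · exact (Real.continuous_sin.comp (continuous_id.mul continuous_const)).continuousOn
  -- values at endpoints
  have hfn : f (n : ℝ) = (-1 : ℝ) ^ n := band_fun_nat α n
  have hfn1 : f ((n : ℝ) + 1) = (-1 : ℝ) ^ (n + 1) := by
    have := band_fun_nat α (n + 1)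
    push_cast at this
    simpa [hf] using this
  -- IVT: 0 in image
  have hzero : ∃ k ∈ Set.Icc (n : ℝ) ((n : ℝ) + 1), f k = 0 := by
    have huIcc : Set.uIcc (n : ℝ) ((n : ℝ) + 1) = Set.Icc (n : ℝ) ((n : ℝ) + 1) :=
      Set.uIcc_of_le hle
    have := intermediate_value_uIcc (by rw [huIcc]; exact hcont)
    have h0mem : (0 : ℝ) ∈ Set.uIcc (f (n : ℝ)) (f ((n : ℝ) + 1)) := by
      rw [hfn, hfn1, pow_succ]
      rcases Nat.even_or_odd n with h | h
      · rw [h.neg_one_pow]; norm_num [Set.uIcc_of_le]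
      · rw [h.neg_one_pow]; norm_num [Set.uIcc_of_ge]
    obtain ⟨k, hk, hk0⟩ := this h0mem
    exact ⟨k, huIcc ▸ hk, hk0⟩
  obtain ⟨k0, hk0mem, hk0⟩ := hzero
  have hk0band : k0 ∈ bandSet A α n :=
    ⟨hk0mem, by show |f k0| ≤ _; rw [hk0]; simp [h0.le]⟩
  -- containment
  have hsub : bandSet A α n ⊆ Set.Ioo (n : ℝ) ((n : ℝ) + 1) := by
    rintro k ⟨⟨hk1, hk2⟩, hk3⟩
    constructor
    · rcases lt_or_eq_of_le hk1 with h | h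
      · exact h
      · exfalso
        rw [← h, band_fun_nat α n] at hk3
        simp [abs_pow] at hk3
        linarith
    · rcases lt_or_eq_of_le hk2 with h | h
      · exact h
      · exfalso
        have hb := band_fun_nat α (n + 1)
        push_cast at hb
        rw [h, hb] at hk3
        simp [abs_pow] at hk3
        linarith
  refine ⟨⟨k0, hk0band⟩, hsub, ⟨k0 ^ 2, ⟨k0, hk0band, rfl⟩⟩, ?_⟩
  rintro x ⟨k, hk, rfl⟩
  obtain ⟨hk1, hk2⟩ := hsub hk
  constructor
  · exact pow_lt_pow_left₀ hk1 hnpos.le two_ne_zero |>.trans_le le_rfl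
  · exact pow_lt_pow_left₀ hk2 (by linarith) two_ne_zero
end

section
/- Let A, α ∈ ℝ with cos(Aπ) ≠ 0 and α < −4(|cos(Aπ)| + 1)/π. Then: (a) for every k ∈ (0, 1) one has cos(kπ) + (α/(4k))·sin(kπ) < −|cos(Aπ)| (so |ξ(k)| > 1 and no spectral band meets (0,1)); and (b) there exists κ > 0 such that |cosh(κπ) + (α/(4κ))·sinh(κπ)| ≤ |cos(Aπ)| (so the first spectral band contains a negative energy −κ²). -/
/-!
Write `β = -απ/4 > |cos Aπ| + 1` and `x = kπ`, so that `α/(4k) · sin(kπ) = -β · sin x / x`.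

(a) On `(0, π)` the half-angle form of `y ≤ tan y` gives `x (1 + cos x) ≤ 2 sin x`, i.e.
`(1 + cos x)/2 ≤ sin x / x`; since `c := |cos Aπ| ≤ 1`, also `cos x + c ≤ (c + 1)(1 + cos x)/2`,
and `β > c + 1` makes the inequality strict.

(b) `y ↦ β sinh y - y cosh y` is positive for small `y > 0` (as `β > 1`) and negative at `y = β`,
so it vanishes at some `y > 0`; at `κ = y/π` the spectral expression is `0`.
-/

open Real Topology

lemma mul_cos_le_sin {x : ℝ} (h0 : 0 ≤ x) (h : x < π / 2) : x * cos x ≤ sin x := by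
  have hcos : 0 < cos x := cos_pos_of_mem_Ioo ⟨by linarith [pi_pos], h⟩
  have := le_tan h0 h
  rwa [tan_eq_sin_div_cos, le_div_iff₀ hcos] at this

lemma mul_one_add_cos_le_two_mul_sin {x : ℝ} (h0 : 0 ≤ x) (h : x < π) :
    x * (1 + cos x) ≤ 2 * sin x := by
  obtain ⟨y, rfl⟩ : ∃ y, x = 2 * y := ⟨x / 2, by ring⟩
  have hcos : 0 ≤ cos y := cos_nonneg_of_mem_Icc ⟨by linarith [pi_pos], by linarith⟩
  calc 2 * y * (1 + cos (2 * y)) = 4 * (y * cos y) * cos y := by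
        linear_combination (-4 * y) * cos_sq y
    _ ≤ 4 * sin y * cos y := by gcongr; exact mul_cos_le_sin (by linarith) (by linarith)
    _ = 2 * sin (2 * y) := by rw [sin_two_mul]; ring

lemma cos_sub_mul_sin_div_lt {c β x : ℝ} (hc : |c| ≤ 1) (hβ : c + 1 < β) (hx0 : 0 < x)
    (hxπ : x < π) : cos x - β * (sin x / x) < -c := by
  obtain ⟨hc₀, hc₁⟩ := abs_le.mp hc
  have hsinc : 0 < sin x / x := div_pos (sin_pos_of_pos_of_lt_pi hx0 hxπ) hx0
  have hhalf : (1 + cos x) / 2 ≤ sin x / x := by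
    rw [div_le_div_iff₀ two_pos hx0]
    linarith [mul_one_add_cos_le_two_mul_sin hx0.le hxπ]
  have hcos_add : cos x + c ≤ (c + 1) * ((1 + cos x) / 2) := by
    nlinarith [cos_le_one x]
  calc cos x - β * (sin x / x) < cos x - (c + 1) * (sin x / x) := by gcongr
    _ ≤ cos x - (c + 1) * ((1 + cos x) / 2) := by gcongr; linarith
    _ ≤ -c := by linarith

lemma exists_pos_mul_sinh_eq_mul_cosh {β : ℝ} (hβ : 1 < β) :
    ∃ y, 0 < y ∧ β * sinh y = y * cosh y := by
  set h : ℝ → ℝ := fun y ↦ β * sinh y - y * cosh y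
  have hnear : ∀ᶠ y in 𝓝[>] 0, cosh y < β ∧ 0 < y :=
    ((continuous_cosh.tendsto 0).mono_left nhdsWithin_le_nhds
      |>.eventually_lt_const (by simpa using hβ)).and self_mem_nhdsWithin
  obtain ⟨y₀, hcosh, hy₀⟩ := hnear.exists
  have hpos : 0 ≤ h y₀ := by
    nlinarith [self_le_sinh_iff.mpr hy₀.le]
  have hneg : h β ≤ 0 := by
    nlinarith [sinh_lt_cosh β]
  have hcont : ContinuousOn h (Set.Ioi 0) := by fun_prop
  obtain ⟨y, hy, hy0⟩ := isPreconnected_Ioi.intermediate_value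
    (show β ∈ Set.Ioi 0 from zero_lt_one.trans hβ) hy₀ hcont ⟨hneg, hpos⟩
  exact ⟨y, hy, sub_eq_zero.mp hy0⟩

theorem first_band_negative_general (A α : ℝ)
    (hα : α < -4 * (|Real.cos (A * π)| + 1) / π) :
    (∀ k ∈ Set.Ioo (0 : ℝ) 1,
      Real.cos (k * π) + α / (4 * k) * Real.sin (k * π) < -|Real.cos (A * π)|) ∧
    (∃ κ : ℝ, 0 < κ ∧
      |Real.cosh (κ * π) + α / (4 * κ) * Real.sinh (κ * π)| ≤ |Real.cos (A * π)|) := by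
  set c := |cos (A * π)|
  have hc : |c| ≤ 1 := by rw [abs_abs]; exact abs_cos_le_one _
  set β := -(α * π / 4) with hβ_def
  have hβ : c + 1 < β := by
    have := (lt_div_iff₀ pi_pos).mp hα
    linarith
  constructor
  · rintro k ⟨hk0, hk1⟩
    have hsub : α / (4 * k) * sin (k * π) = -(β * (sin (k * π) / (k * π))) := by
      rw [hβ_def]; field_simp
    rw [hsub, ← sub_eq_add_neg]
    exact cos_sub_mul_sin_div_lt hc hβ (by positivity) (by nlinarith [pi_pos])
  · obtain ⟨y, hy0, hy⟩ := exists_pos_mul_sinh_eq_mul_cosh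
      (by linarith [abs_nonneg (cos (A * π))] : 1 < β)
    refine ⟨y / π, by positivity, ?_⟩
    have hzero : cosh (y / π * π) + α / (4 * (y / π)) * sinh (y / π * π) = 0 := by
      rw [div_mul_cancel₀ y pi_ne_zero]
      field_simp
      linear_combination (-4) * hy
    rw [hzero, abs_zero]
    exact abs_nonneg _

/-- if `α < −4(|cos Aπ| + 1)/π` then (a) on `(0,1)` one has
`cos(kπ) + (α/(4k))·sin(kπ) < −|cos Aπ|`, and (b) some negative energy `−κ²` satisfies
the spectral condition `|cosh(κπ) + (α/(4κ))·sinh(κπ)| ≤ |cos Aπ|`. -/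
theorem first_band_negative (A α : ℝ) (hA : Real.cos (A * π) ≠ 0)
    (hα : α < -4 * (|Real.cos (A * π)| + 1) / π) :
    (∀ k ∈ Set.Ioo (0 : ℝ) 1,
      Real.cos (k * π) + α / (4 * k) * Real.sin (k * π) < -|Real.cos (A * π)|) ∧
    (∃ κ : ℝ, 0 < κ ∧
      |Real.cosh (κ * π) + α / (4 * κ) * Real.sinh (κ * π)| ≤ |Real.cos (A * π)|) :=
  first_band_negative_general A α hα
end

section
/- Let A, α ∈ ℝ with cos(Aπ) ≠ 0 and α > 4(|cos(Aπ)| − 1)/π. Then: (a) for every κ > 0 one has cosh(κπ) + (α/(4κ))·sinh(κπ) > |cos(Aπ)| (so there is no negative energy in the spectrum); and (b) there exists k ∈ (0, 1) such that |cos(kπ) + (α/(4k))·sin(kπ)| ≤ |cos(Aπ)| (so the first spectral band meets the interval (0,1) of momenta). -/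
/-!
In the variable `x = kπ` (resp. `x = κπ`) the band function reads `cos x + b · sin x / x`
(resp. `cosh x + b · sinh x / x`) with `b = απ/4 > |cos Aπ| - 1`.
Below the spectrum, `sinh x / x ≤ cosh x` gives the lower bound `|cos Aπ| · cosh x ≥ |cos Aπ|`.
For the first band, `cos x + b · sinc x` is continuous, equals `1 + b > |cos Aπ|` at `0` and `-1`
at `π`, so the intermediate value theorem yields a point of the band with `x ∈ (0, π)`.
-/

open Real Set

lemma Real.sinh_le_mul_cosh {x : ℝ} (hx : 0 ≤ x) : sinh x ≤ x * cosh x := by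
  rcases hx.eq_or_lt with rfl | hx
  · simp
  obtain ⟨ξ, hξ, hslope⟩ := exists_deriv_eq_slope sinh hx continuous_sinh.continuousOn
    differentiable_sinh.differentiableOn
  rw [deriv_sinh, sinh_zero, sub_zero, sub_zero, eq_div_iff hx.ne'] at hslope
  have hcosh : cosh ξ ≤ cosh x := cosh_le_cosh.mpr (abs_le_abs_of_nonneg hξ.1.le hξ.2.le)
  nlinarith

lemma lt_cosh_add_mul_sinh_div {b c x : ℝ} (hc₀ : 0 ≤ c) (hc₁ : c ≤ 1) (hb : c - 1 < b)
    (hx : 0 < x) : c < cosh x + b * (sinh x / x) := by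
  have hsinhc_pos : 0 < sinh x / x := div_pos (sinh_pos_iff.mpr hx) hx
  have hsinhc_le : sinh x / x ≤ cosh x := by
    rw [div_le_iff₀ hx, mul_comm]
    exact sinh_le_mul_cosh hx.le
  calc c ≤ c * cosh x := le_mul_of_one_le_right hc₀ (one_le_cosh x)
    _ = cosh x + (c - 1) * cosh x := by ring
    _ ≤ cosh x + (c - 1) * (sinh x / x) :=
      add_le_add_right (mul_le_mul_of_nonpos_left hsinhc_le (by linarith : c - 1 ≤ 0)) _
    _ < cosh x + b * (sinh x / x) := by gcongr

lemma exists_cos_add_mul_sinc_eq {b c : ℝ} (hc₁ : -1 < c) (hc₂ : c < 1 + b) :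
    ∃ x ∈ Ioo 0 π, cos x + b * sinc x = c := by
  have hcont : Continuous fun x ↦ cos x + b * sinc x := by fun_prop
  have hmem : c ∈ Ioo (cos π + b * sinc π) (cos 0 + b * sinc 0) := by
    simpa [sinc_of_ne_zero pi_ne_zero, sinc_zero] using And.intro hc₁ hc₂
  exact intermediate_value_Ioo' pi_pos.le hcont.continuousOn hmem

theorem first_band_positive_general (A α : ℝ)
    (hα : α > 4 * (|Real.cos (A * π)| - 1) / π) :
    (∀ κ : ℝ, 0 < κ →
      Real.cosh (κ * π) + α / (4 * κ) * Real.sinh (κ * π) > |Real.cos (A * π)|) ∧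
    (∃ k ∈ Set.Ioo (0 : ℝ) 1,
      |Real.cos (k * π) + α / (4 * k) * Real.sin (k * π)| ≤ |Real.cos (A * π)|) := by
  set c := |cos (A * π)|
  have hc₀ : 0 ≤ c := abs_nonneg _
  have hc₁ : c ≤ 1 := abs_cos_le_one _
  have hb : c - 1 < α * π / 4 := by
    rw [gt_iff_lt, div_lt_iff₀ pi_pos] at hα
    linarith
  refine ⟨fun κ hκ ↦ ?_, ?_⟩
  · have hrw : α / (4 * κ) * sinh (κ * π) = α * π / 4 * (sinh (κ * π) / (κ * π)) := by
      field_simp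
    rw [hrw]
    exact lt_cosh_add_mul_sinh_div hc₀ hc₁ hb (mul_pos hκ pi_pos)
  · obtain ⟨x, ⟨hx₀, hxπ⟩, hx⟩ := exists_cos_add_mul_sinc_eq (by linarith) (by linarith : c < 1 + α * π / 4)
    refine ⟨x / π, ⟨div_pos hx₀ pi_pos, (div_lt_one pi_pos).mpr hxπ⟩, le_of_eq ?_⟩
    have hband : cos (x / π * π) + α / (4 * (x / π)) * sin (x / π * π) = c := by
      rw [← hx, div_mul_cancel₀ x pi_ne_zero, sinc_of_ne_zero hx₀.ne']
      field_simp
    rw [hband, abs_of_nonneg hc₀]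

/-- if `α > 4(|cos Aπ| − 1)/π` then (a) for every `κ > 0` one has
`cosh(κπ) + (α/(4κ))·sinh(κπ) > |cos Aπ|` (no negative spectrum), and (b) some
`k ∈ (0,1)` satisfies the band condition `|cos(kπ) + (α/(4k))·sin(kπ)| ≤ |cos Aπ|`. -/
theorem first_band_positive (A α : ℝ) (hA : Real.cos (A * π) ≠ 0)
    (hα : α > 4 * (|Real.cos (A * π)| - 1) / π) :
    (∀ κ : ℝ, 0 < κ →
      Real.cosh (κ * π) + α / (4 * κ) * Real.sinh (κ * π) > |Real.cos (A * π)|) ∧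
    (∃ k ∈ Set.Ioo (0 : ℝ) 1,
      |Real.cos (k * π) + α / (4 * k) * Real.sin (k * π)| ≤ |Real.cos (A * π)|) :=
  first_band_positive_general A α hα
end

section
/- Let ξ ∈ ℝ with |ξ| > 1, let s be a nonzero real number, let γ ∈ ℝ, and set λ = ξ − sgn(ξ)·√(ξ² − 1). Then det[ (N(ξ) + 2γs·M)·(1, λ)ᵀ | (1, 1/λ)ᵀ ] = 0 if and only if γ = −sgn(ξ)·√(ξ² − 1)/s. -/
/-- The transfer matrix `N(ξ)` with rows `(2ξ, −1)` and `(1, 0)`. -/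
def Nmat (ξ : ℝ) : Matrix (Fin 2) (Fin 2) ℝ := !![2 * ξ, -1; 1, 0]

/-- The matrix `M` with rows `(1, 0)` and `(0, 0)`. -/
def Mmat : Matrix (Fin 2) (Fin 2) ℝ := !![1, 0; 0, 0]

/-- `λ(ξ) = ξ − sgn(ξ)·√(ξ² − 1)`. -/
noncomputable def lamSmall (ξ : ℝ) : ℝ := ξ - Real.sign ξ * Real.sqrt (ξ ^ 2 - 1)

/-- `det[v | w]`: the determinant of the 2×2 matrix with columns `v` and `w`. -/
def detCols (v w : Fin 2 → ℝ) : ℝ := Matrix.det !![v 0, w 0; v 1, w 1]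

/-! `λ` and `ξ + sgn(ξ)·√(ξ² − 1)` are the two roots of `x² − 2ξx + 1`, so their product is `1`;
in particular `λ ≠ 0`. Expanding the determinant gives `(2ξ + 2γs − λ)/λ − 1`, which vanishes
exactly when `2γs = 2(λ − ξ) = −2 sgn(ξ)·√(ξ² − 1)`. -/

theorem detCols_mulVec_Nmat_add_smul_Mmat (ξ c l : ℝ) :
    detCols ((Nmat ξ + c • Mmat).mulVec ![1, l]) ![1, 1 / l] = (2 * ξ + c - l) / l - 1 := by
  simp [detCols, Nmat, Mmat, Matrix.det_fin_two_of]
  ring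

theorem Real.sign_mul_self_of_ne_zero {x : ℝ} (hx : x ≠ 0) : Real.sign x * Real.sign x = 1 := by
  rcases Real.sign_apply_eq_of_ne_zero x hx with h | h <;> simp [h]

theorem lamSmall_mul_add_sign_mul_sqrt {ξ : ℝ} (hξ : 1 ≤ |ξ|) :
    lamSmall ξ * (ξ + Real.sign ξ * Real.sqrt (ξ ^ 2 - 1)) = 1 := by
  have hξ0 : ξ ≠ 0 := by
    rintro rfl
    norm_num at hξ
  have hsq : Real.sqrt (ξ ^ 2 - 1) ^ 2 = ξ ^ 2 - 1 :=
    Real.sq_sqrt (by nlinarith [sq_abs ξ])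
  have hsign := Real.sign_mul_self_of_ne_zero hξ0
  unfold lamSmall
  linear_combination (-(Real.sign ξ * Real.sign ξ)) * hsq - (ξ ^ 2 - 1) * hsign

theorem lamSmall_ne_zero {ξ : ℝ} (hξ : 1 ≤ |ξ|) : lamSmall ξ ≠ 0 :=
  left_ne_zero_of_mul_eq_one (lamSmall_mul_add_sign_mul_sqrt hξ)

/-- the single-impurity eigenvalue condition:
`det[(N(ξ) + 2γs·M)(1,λ)ᵀ | (1,1/λ)ᵀ] = 0` iff `γ = −sgn(ξ)·√(ξ²−1)/s`. -/
theorem single_impurity_condition (ξ : ℝ) (hξ : 1 < |ξ|) (s : ℝ) (hs : s ≠ 0) (γ : ℝ) :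
    detCols ((Nmat ξ + (2 * γ * s) • Mmat).mulVec ![1, lamSmall ξ]) ![1, 1 / lamSmall ξ] = 0 ↔
      γ = -Real.sign ξ * Real.sqrt (ξ ^ 2 - 1) / s := by
  rw [detCols_mulVec_Nmat_add_smul_Mmat, sub_eq_zero,
    div_eq_one_iff_eq (lamSmall_ne_zero hξ.le), eq_div_iff hs]
  unfold lamSmall
  constructor <;> intro h <;> linarith
end

section
/- Let ξ ∈ ℝ with |ξ| > 1, let s be a nonzero real number, let γ₁, γ₂ ∈ ℝ, set λ = ξ − sgn(ξ)·√(ξ² − 1) and f = −sgn(ξ)·√(ξ² − 1)/s. Then det[ N(ξ + γ₂s)·N(ξ + γ₁s)·(1, λ)ᵀ | (1, 1/λ)ᵀ ] = 0 if and only if γ₁ + γ₂ = f − (ξ + √(1 + s²(γ₁ − γ₂)²))/s or γ₁ + γ₂ = f − (ξ − √(1 + s²(γ₁ − γ₂)²))/s. -/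
/-- the two-adjacent-impurities eigenvalue condition: with
`λ = ξ − sgn(ξ)√(ξ²−1)` and `f = −sgn(ξ)√(ξ²−1)/s`, one has
`det[N(ξ+γ₂s)·N(ξ+γ₁s)·(1,λ)ᵀ | (1,1/λ)ᵀ] = 0` iff
`γ₁+γ₂ = f − (ξ ± √(1+s²(γ₁−γ₂)²))/s`. -/
theorem two_adjacent_impurities_condition (ξ : ℝ) (hξ : 1 < |ξ|) (s : ℝ) (hs : s ≠ 0)
    (γ₁ γ₂ : ℝ) :
    detCols ((Nmat (ξ + γ₂ * s) * Nmat (ξ + γ₁ * s)).mulVec ![1, lamSmall ξ])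
        ![1, 1 / lamSmall ξ] = 0 ↔
      (γ₁ + γ₂ = -Real.sign ξ * Real.sqrt (ξ ^ 2 - 1) / s
          - (ξ + Real.sqrt (1 + s ^ 2 * (γ₁ - γ₂) ^ 2)) / s ∨
       γ₁ + γ₂ = -Real.sign ξ * Real.sqrt (ξ ^ 2 - 1) / s
          - (ξ - Real.sqrt (1 + s ^ 2 * (γ₁ - γ₂) ^ 2)) / s) := by
  set σ := Real.sign ξ with hσdef
  set r := Real.sqrt (ξ ^ 2 - 1) with hrdef
  set Q := Real.sqrt (1 + s ^ 2 * (γ₁ - γ₂) ^ 2) with hQdef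
  have hξ0 : ξ ≠ 0 := by
    intro h; rw [h] at hξ; norm_num at hξ
  have hσ2 : σ ^ 2 = 1 := by
    rcases lt_or_gt_of_ne hξ0 with h | h
    · rw [hσdef, Real.sign_of_neg h]; norm_num
    · rw [hσdef, Real.sign_of_pos h]; norm_num
  have hξsq : 1 < ξ ^ 2 := by nlinarith [sq_abs ξ, abs_nonneg ξ]
  have hr2 : r ^ 2 = ξ ^ 2 - 1 := Real.sq_sqrt (by linarith)
  have hQ2 : Q ^ 2 = 1 + s ^ 2 * (γ₁ - γ₂) ^ 2 :=
    Real.sq_sqrt (by positivity)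
  have hlm : lamSmall ξ * (ξ + σ * r) = 1 := by
    rw [lamSmall, ← hσdef, ← hrdef]; nlinarith [hσ2, hr2]
  have hl0 : lamSmall ξ ≠ 0 := by
    intro h; rw [h, zero_mul] at hlm; norm_num at hlm
  have hm0 : ξ + σ * r ≠ 0 := by
    intro h; rw [h, mul_zero] at hlm; norm_num at hlm
  have hinv : 1 / lamSmall ξ = ξ + σ * r := by
    field_simp
    linarith [hlm]
  have hD : detCols ((Nmat (ξ + γ₂ * s) * Nmat (ξ + γ₁ * s)).mulVec ![1, lamSmall ξ])
      ![1, 1 / lamSmall ξ]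
      = 2 * (ξ + σ * r) *
        (s * (γ₁ + γ₂) * (ξ + σ * r) + σ * r * ξ + r ^ 2 + 2 * s ^ 2 * (γ₁ * γ₂)) := by
    simp only [detCols, Nmat, Matrix.mulVec, Matrix.mul_apply, Fin.sum_univ_succ,
      Matrix.det_fin_two, Matrix.cons_val', Matrix.cons_val_zero, Matrix.cons_val_one,
      Matrix.head_cons, Matrix.empty_val', Matrix.cons_val_fin_one, Matrix.head_fin_const,
      Fin.sum_univ_zero, Matrix.of_apply, dotProduct, Fin.succ_zero_eq_one,
      Matrix.cons_val_succ]
    rw [hinv, lamSmall, ← hσdef, ← hrdef]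
    linear_combination (-2 * s * γ₁ * r ^ 2) * hσ2 +
      (-2 * σ * r - 2 * s * γ₁ - 2 * ξ) * hr2
  have h2μ : (2 : ℝ) * (ξ + σ * r) ≠ 0 := by
    intro h; apply hm0; linarith [mul_eq_zero.mp h]
  have key : ∀ t : ℝ, (γ₁ + γ₂ = -σ * r / s - (ξ + t) / s) ↔
      (s * (γ₁ + γ₂) + ξ + σ * r + t = 0) := by
    intro t
    rw [show -σ * r / s - (ξ + t) / s = (-(σ * r) - (ξ + t)) / s by ring, eq_div_iff hs]
    constructor <;> intro h <;> linear_combination h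
  have key' : (γ₁ + γ₂ = -σ * r / s - (ξ - Q) / s) ↔
      (s * (γ₁ + γ₂) + ξ + σ * r - Q = 0) := by
    rw [show ξ - Q = ξ + (-Q) by ring, key (-Q)]
    constructor <;> intro h <;> linarith
  rw [hD, mul_eq_zero, or_iff_right h2μ, key Q, key']
  constructor
  · intro hC
    have h0 : (s * (γ₁ + γ₂) + ξ + σ * r - Q) * (s * (γ₁ + γ₂) + ξ + σ * r + Q) = 0 := by
      linear_combination 2 * hC + r ^ 2 * hσ2 - hr2 - hQ2
    rcases mul_eq_zero.mp h0 with h | h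
    · right; linarith
    · left; linarith
  · rintro (h | h)
    · linear_combination ((s * (γ₁ + γ₂) + ξ + σ * r - Q) / 2) * h + (1 / 2) * hQ2 -
        (r ^ 2 / 2) * hσ2 + (1 / 2) * hr2
    · linear_combination ((s * (γ₁ + γ₂) + ξ + σ * r + Q) / 2) * h + (1 / 2) * hQ2 -
        (r ^ 2 / 2) * hσ2 + (1 / 2) * hr2
end

section
/- Let φ ∈ ℝ with sin(φ) ≠ 0 and let m ≥ 2 be an integer. Consider the quadratic equation sin((m−1)φ)·λ² − 2·sin(mφ)·λ + sin((m+1)φ) = 0. If sin((m−1)φ/2) ≠ 0 then λ = cos(φ) + cot((m−1)φ/2)·sin(φ) is a solution, and if cos((m−1)φ/2) ≠ 0 then λ = cos(φ) − tan((m−1)φ/2)·sin(φ) is a solution. -/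
/-- for `sin φ ≠ 0` and `m ≥ 2`, the quadratic
`sin((m−1)φ)·λ² − 2 sin(mφ)·λ + sin((m+1)φ) = 0` is solved by
`λ = cos φ + cot((m−1)φ/2)·sin φ` (when `sin((m−1)φ/2) ≠ 0`) and by
`λ = cos φ − tan((m−1)φ/2)·sin φ` (when `cos((m−1)φ/2) ≠ 0`). -/
theorem identical_impurities_roots (φ : ℝ) (hφ : Real.sin φ ≠ 0) (m : ℕ) (hm : 2 ≤ m) :
    (Real.sin (((m : ℝ) - 1) * φ / 2) ≠ 0 →
      Real.sin (((m : ℝ) - 1) * φ) *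
          (Real.cos φ + Real.cot (((m : ℝ) - 1) * φ / 2) * Real.sin φ) ^ 2
        - 2 * Real.sin ((m : ℝ) * φ) *
          (Real.cos φ + Real.cot (((m : ℝ) - 1) * φ / 2) * Real.sin φ)
        + Real.sin (((m : ℝ) + 1) * φ) = 0) ∧
    (Real.cos (((m : ℝ) - 1) * φ / 2) ≠ 0 →
      Real.sin (((m : ℝ) - 1) * φ) *
          (Real.cos φ - Real.tan (((m : ℝ) - 1) * φ / 2) * Real.sin φ) ^ 2
        - 2 * Real.sin ((m : ℝ) * φ) *
          (Real.cos φ - Real.tan (((m : ℝ) - 1) * φ / 2) * Real.sin φ)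
        + Real.sin (((m : ℝ) + 1) * φ) = 0) := by
  have h1 : ((m : ℝ) - 1) * φ = 2 * (((m : ℝ) - 1) * φ / 2) := by ring
  have h2 : (m : ℝ) * φ = 2 * (((m : ℝ) - 1) * φ / 2) + φ := by ring
  have h3 : ((m : ℝ) + 1) * φ = 2 * (((m : ℝ) - 1) * φ / 2) + 2 * φ := by ring
  rw [h1, h2, h3]
  set x := ((m : ℝ) - 1) * φ / 2 with hx
  clear_value x
  have hc : Real.cos (2 * x) = Real.cos x ^ 2 - Real.sin x ^ 2 := by
    rw [Real.cos_two_mul]; nlinarith [Real.sin_sq_add_cos_sq x]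
  have hcφ : Real.cos (2 * φ) = Real.cos φ ^ 2 - Real.sin φ ^ 2 := by
    rw [Real.cos_two_mul]; nlinarith [Real.sin_sq_add_cos_sq φ]
  have hsa : Real.sin (2 * x + φ)
      = 2 * Real.sin x * Real.cos x * Real.cos φ
        + (Real.cos x ^ 2 - Real.sin x ^ 2) * Real.sin φ := by
    rw [Real.sin_add, Real.sin_two_mul, hc]
  have hsb : Real.sin (2 * x + 2 * φ)
      = 2 * Real.sin x * Real.cos x * (Real.cos φ ^ 2 - Real.sin φ ^ 2)
        + (Real.cos x ^ 2 - Real.sin x ^ 2) * (2 * Real.sin φ * Real.cos φ) := by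
    rw [Real.sin_add, Real.sin_two_mul, hc, hcφ, Real.sin_two_mul]
  rw [hsa, hsb, Real.sin_two_mul]
  constructor <;> intro h
  · rw [show 2 * x / 2 = x from by ring] at h
    rw [Real.cot_eq_cos_div_sin]
    field_simp
    ring
  · rw [show 2 * x / 2 = x from by ring] at h
    rw [Real.tan_eq_sin_div_cos]
    field_simp
    ring
end

section
/- Let N and M be 2×2 real matrices with det N = 1, and suppose u₁, u₂ ∈ ℝ² satisfy N·u₁ = λ₁u₁ and N·u₂ = λ₂u₂ with λ₁λ₂ = 1. Then for all integers m ≥ 1 and 1 ≤ j ≤ m: det[ N^{m−j}·M·N^{j−1}·u₂ | u₁ ] = λ₂^{m−1}·det[ M·u₂ | u₁ ] and det[ N^{m−j}·M·N^{j−1}·u₁ | u₂ ] = λ₁^{m−1}·det[ M·u₁ | u₂ ]. -/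
open Matrix

theorem pow_mulVec_of_mulVec_eq_smul {n R : Type*} [Fintype n] [DecidableEq n] [CommSemiring R]
    {N : Matrix n n R} {u : n → R} {l : R} (h : N *ᵥ u = l • u) (k : ℕ) :
    (N ^ k) *ᵥ u = l ^ k • u := by
  induction k with
  | zero => simp
  | succ k ih => rw [pow_succ, ← mulVec_mulVec, h, mulVec_smul, ih, smul_smul, pow_succ']

theorem detCols_smul_left (c : ℝ) (v w : Fin 2 → ℝ) :
    detCols (c • v) w = c * detCols v w := by
  simp only [detCols, det_fin_two_of, Pi.smul_apply, smul_eq_mul]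
  ring

theorem detCols_smul_right (c : ℝ) (v w : Fin 2 → ℝ) :
    detCols v (c • w) = c * detCols v w := by
  simp only [detCols, det_fin_two_of, Pi.smul_apply, smul_eq_mul]
  ring

theorem detCols_mulVec_mulVec (N : Matrix (Fin 2) (Fin 2) ℝ) (v w : Fin 2 → ℝ) :
    detCols (N *ᵥ v) (N *ᵥ w) = N.det * detCols v w := by
  simp only [detCols, det_fin_two_of, N.det_fin_two, mulVec, dotProduct, Fin.sum_univ_two]
  ring

theorem detCols_pow_mulVec_left {N : Matrix (Fin 2) (Fin 2) ℝ} (hN : N.det = 1)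
    {u : Fin 2 → ℝ} {l l' : ℝ} (hu : N *ᵥ u = l • u) (hl : l * l' = 1) (a : ℕ)
    (x : Fin 2 → ℝ) :
    detCols ((N ^ a) *ᵥ x) u = l' ^ a * detCols x u := by
  calc detCols ((N ^ a) *ᵥ x) u
      = l' ^ a * (l ^ a * detCols ((N ^ a) *ᵥ x) u) := by
        rw [← mul_assoc, ← mul_pow, mul_comm l', hl, one_pow, one_mul]
    _ = l' ^ a * detCols ((N ^ a) *ᵥ x) ((N ^ a) *ᵥ u) := by
        rw [pow_mulVec_of_mulVec_eq_smul hu, detCols_smul_right]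
    _ = l' ^ a * detCols x u := by
        rw [detCols_mulVec_mulVec, det_pow, hN, one_pow, one_mul]

theorem detCols_pow_mul_mul_pow_mulVec {N : Matrix (Fin 2) (Fin 2) ℝ} (hN : N.det = 1)
    (M : Matrix (Fin 2) (Fin 2) ℝ) {u₁ u₂ : Fin 2 → ℝ} {l₁ l₂ : ℝ}
    (h1 : N *ᵥ u₁ = l₁ • u₁) (h2 : N *ᵥ u₂ = l₂ • u₂) (hl : l₁ * l₂ = 1) (a b : ℕ) :
    detCols ((N ^ a * M * N ^ b) *ᵥ u₂) u₁ = l₂ ^ (a + b) * detCols (M *ᵥ u₂) u₁ := by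
  rw [← mulVec_mulVec, pow_mulVec_of_mulVec_eq_smul h2, mulVec_smul,
    detCols_smul_left, ← mulVec_mulVec, detCols_pow_mulVec_left hN h1 hl, pow_add]
  ring

theorem first_order_term_determinants_general (N M : Matrix (Fin 2) (Fin 2) ℝ) (hN : N.det = 1)
    (u₁ u₂ : Fin 2 → ℝ) (l₁ l₂ : ℝ)
    (h1 : N.mulVec u₁ = l₁ • u₁) (h2 : N.mulVec u₂ = l₂ • u₂) (hl : l₁ * l₂ = 1)
    (m j : ℕ) (hj1 : 1 ≤ j) (hjm : j ≤ m) :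
    detCols ((N ^ (m - j) * M * N ^ (j - 1)).mulVec u₂) u₁
        = l₂ ^ (m - 1) * detCols (M.mulVec u₂) u₁ ∧
    detCols ((N ^ (m - j) * M * N ^ (j - 1)).mulVec u₁) u₂
        = l₁ ^ (m - 1) * detCols (M.mulVec u₁) u₂ := by
  have hexp : m - j + (j - 1) = m - 1 := by omega
  rw [← hexp]
  exact ⟨detCols_pow_mul_mul_pow_mulVec hN M h1 h2 hl _ _,
    detCols_pow_mul_mul_pow_mulVec hN M h2 h1 (mul_comm l₁ l₂ ▸ hl) _ _⟩

/-- if `det N = 1`, `N u₁ = λ₁u₁`, `N u₂ = λ₂u₂` with `λ₁λ₂ = 1`, then for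
`1 ≤ j ≤ m`:
`det[N^{m−j} M N^{j−1} u₂ | u₁] = λ₂^{m−1}·det[M u₂ | u₁]` and
`det[N^{m−j} M N^{j−1} u₁ | u₂] = λ₁^{m−1}·det[M u₁ | u₂]`. -/
theorem first_order_term_determinants (N M : Matrix (Fin 2) (Fin 2) ℝ) (hN : N.det = 1)
    (u₁ u₂ : Fin 2 → ℝ) (l₁ l₂ : ℝ)
    (h1 : N.mulVec u₁ = l₁ • u₁) (h2 : N.mulVec u₂ = l₂ • u₂) (hl : l₁ * l₂ = 1)
    (m j : ℕ) (hm : 1 ≤ m) (hj1 : 1 ≤ j) (hjm : j ≤ m) :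
    detCols ((N ^ (m - j) * M * N ^ (j - 1)).mulVec u₂) u₁
        = l₂ ^ (m - 1) * detCols (M.mulVec u₂) u₁ ∧
    detCols ((N ^ (m - j) * M * N ^ (j - 1)).mulVec u₁) u₂
        = l₁ ^ (m - 1) * detCols (M.mulVec u₁) u₂ :=
  first_order_term_determinants_general N M hN u₁ u₂ l₁ l₂ h1 h2 hl m j hj1 hjm
end

section
/- Let ξ ∈ ℝ with |ξ| > 1, let s₁, s₂ ∈ ℝ, let n ≥ 0 be an integer, and define c₁₂(s) = s/(2√(ξ²−1)), c₂₁(s) = −s/(2√(ξ²−1)), c₂₂(s) = 1 − s/(2√(ξ²−1)). Then det[ (N(ξ) + s₂M)·N(ξ)ⁿ·(N(ξ) + s₁M)·u₂(ξ) | u₁(ξ) ] = ( λ₁(ξ)ⁿ·c₁₂(s₁)·c₂₁(s₂) + λ₂(ξ)^{n+2}·c₂₂(s₁)·c₂₂(s₂) )·det[ u₂(ξ) | u₁(ξ) ]. -/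
/-- `λ₁(ξ) = ξ + √(ξ² − 1)`. -/
noncomputable def lam1 (ξ : ℝ) : ℝ := ξ + Real.sqrt (ξ ^ 2 - 1)

/-- `λ₂(ξ) = ξ − √(ξ² − 1)`. -/
noncomputable def lam2 (ξ : ℝ) : ℝ := ξ - Real.sqrt (ξ ^ 2 - 1)

/-- `u₁(ξ) = (1, λ₂(ξ))ᵀ`. -/
noncomputable def uvec1 (ξ : ℝ) : Fin 2 → ℝ := ![1, lam2 ξ]

/-- `u₂(ξ) = (1, λ₁(ξ))ᵀ`. -/
noncomputable def uvec2 (ξ : ℝ) : Fin 2 → ℝ := ![1, lam1 ξ]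

/-- `c₁₂(s) = s/(2√(ξ²−1))`. -/
noncomputable def c12 (ξ s : ℝ) : ℝ := s / (2 * Real.sqrt (ξ ^ 2 - 1))

/-- `c₂₁(s) = −s/(2√(ξ²−1))`. -/
noncomputable def c21 (ξ s : ℝ) : ℝ := -(s / (2 * Real.sqrt (ξ ^ 2 - 1)))

/-- `c₂₂(s) = 1 − s/(2√(ξ²−1))`. -/
noncomputable def c22 (ξ s : ℝ) : ℝ := 1 - s / (2 * Real.sqrt (ξ ^ 2 - 1))

lemma detCols_add (v w u : Fin 2 → ℝ) : detCols (v + w) u = detCols v u + detCols w u := by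
  simp [detCols, Matrix.det_fin_two]; ring

lemma detCols_smul (a : ℝ) (v u : Fin 2 → ℝ) : detCols (a • v) u = a * detCols v u := by
  simp [detCols, Matrix.det_fin_two]; ring

/-- determinant identity for the transfer matrix across two impurities
separated by `n` unperturbed vertices. -/
theorem two_distant_impurities_determinant (ξ : ℝ) (hξ : 1 < |ξ|) (s₁ s₂ : ℝ) (n : ℕ) :
    detCols (((Nmat ξ + s₂ • Mmat) * (Nmat ξ) ^ n * (Nmat ξ + s₁ • Mmat)).mulVec (uvec2 ξ))
        (uvec1 ξ)
      = ((lam1 ξ) ^ n * c12 ξ s₁ * c21 ξ s₂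
          + (lam2 ξ) ^ (n + 2) * c22 ξ s₁ * c22 ξ s₂) * detCols (uvec2 ξ) (uvec1 ξ) := by
  have habs : 1 < ξ ^ 2 := by nlinarith [sq_abs ξ, hξ, abs_nonneg ξ]
  set d := Real.sqrt (ξ ^ 2 - 1) with hdd
  have hd2 : d ^ 2 = ξ ^ 2 - 1 := Real.sq_sqrt (by linarith)
  have hd0 : 0 < d := Real.sqrt_pos.mpr (by linarith)
  have hprod : lam1 ξ * lam2 ξ = 1 := by
    simp only [lam1, lam2, ← hdd]; nlinarith [hd2]
  have hsum : lam1 ξ + lam2 ξ = 2 * ξ := by simp [lam1, lam2, ← hdd]; ring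
  have hdiff : lam1 ξ - lam2 ξ = 2 * d := by simp [lam1, lam2, ← hdd]; ring
  -- eigenvector lemmas
  have e2 : (Nmat ξ).mulVec (uvec2 ξ) = lam2 ξ • uvec2 ξ := by
    funext i; fin_cases i <;>
      simp [Nmat, uvec2, Matrix.mulVec, dotProduct, Fin.sum_univ_two, lam1, lam2, ← hdd] <;>
      nlinarith [hd2]
  have e1 : (Nmat ξ).mulVec (uvec1 ξ) = lam1 ξ • uvec1 ξ := by
    funext i; fin_cases i <;>
      simp [Nmat, uvec1, Matrix.mulVec, dotProduct, Fin.sum_univ_two, lam1, lam2, ← hdd] <;>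
      nlinarith [hd2]
  have p2 : ∀ k : ℕ, ((Nmat ξ) ^ k).mulVec (uvec2 ξ) = (lam2 ξ) ^ k • uvec2 ξ := by
    intro k; induction k with
    | zero => simp
    | succ k ih =>
        rw [pow_succ, ← Matrix.mulVec_mulVec, e2, Matrix.mulVec_smul, ih, smul_smul, pow_succ]
        ring_nf
  have p1 : ∀ k : ℕ, ((Nmat ξ) ^ k).mulVec (uvec1 ξ) = (lam1 ξ) ^ k • uvec1 ξ := by
    intro k; induction k with
    | zero => simp
    | succ k ih =>
        rw [pow_succ, ← Matrix.mulVec_mulVec, e1, Matrix.mulVec_smul, ih, smul_smul, pow_succ]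
        ring_nf
  -- first impurity decomposition
  have h1mul : (Nmat ξ + s₁ • Mmat).mulVec (uvec2 ξ)
      = (lam2 ξ * c22 ξ s₁) • uvec2 ξ + (lam1 ξ * c12 ξ s₁) • uvec1 ξ := by
    funext i
    fin_cases i
    · simp [Nmat, Mmat, uvec1, uvec2, Matrix.mulVec, dotProduct, Fin.sum_univ_two,
        c12, c22, ← hdd, Matrix.add_apply, Matrix.smul_apply]
      field_simp
      linear_combination (-2*d) * hsum + (-s₁) * hdiff
    · simp [Nmat, Mmat, uvec1, uvec2, Matrix.mulVec, dotProduct, Fin.sum_univ_two,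
        c12, c22, ← hdd, Matrix.add_apply, Matrix.smul_apply]
      field_simp
      linear_combination (-2*d) * hprod
  -- second impurity applied to eigenvectors
  have g2 : (Nmat ξ + s₂ • Mmat).mulVec (uvec2 ξ) = ![lam2 ξ + s₂, 1] := by
    funext i; fin_cases i <;>
      simp [Nmat, Mmat, uvec2, Matrix.mulVec, dotProduct, Fin.sum_univ_two, lam1, lam2,
        ← hdd, Matrix.add_apply, Matrix.smul_apply] <;> nlinarith [hd2]
  have g1 : (Nmat ξ + s₂ • Mmat).mulVec (uvec1 ξ) = ![lam1 ξ + s₂, 1] := by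
    funext i; fin_cases i <;>
      simp [Nmat, Mmat, uvec1, Matrix.mulVec, dotProduct, Fin.sum_univ_two, lam1, lam2,
        ← hdd, Matrix.add_apply, Matrix.smul_apply] <;> nlinarith [hd2]
  have T2 : detCols ![lam2 ξ + s₂, 1] (uvec1 ξ) = lam2 ξ * c22 ξ s₂ * detCols (uvec2 ξ) (uvec1 ξ) := by
    simp [detCols, Matrix.det_fin_two, uvec1, uvec2, c22, ← hdd]
    field_simp
    linear_combination (2*d) * hprod + (-s₂ * lam2 ξ) * hdiff
  have T1 : detCols ![lam1 ξ + s₂, 1] (uvec1 ξ) = lam2 ξ * c21 ξ s₂ * detCols (uvec2 ξ) (uvec1 ξ) := by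
    simp [detCols, Matrix.det_fin_two, uvec1, uvec2, c21, ← hdd]
    field_simp
    linear_combination (2*d) * hprod + (-s₂ * lam2 ξ) * hdiff
  rw [← Matrix.mulVec_mulVec, ← Matrix.mulVec_mulVec, h1mul, Matrix.mulVec_add,
    Matrix.mulVec_smul, Matrix.mulVec_smul, p1, p2, Matrix.mulVec_add,
    Matrix.mulVec_smul, Matrix.mulVec_smul, Matrix.mulVec_smul, Matrix.mulVec_smul,
    g1, g2, detCols_add, detCols_smul, detCols_smul, detCols_smul, detCols_smul, T1, T2]
  linear_combination (lam1 ξ ^ n * c12 ξ s₁ * c21 ξ s₂ * detCols (uvec2 ξ) (uvec1 ξ)) * hprod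
end

section
/- Let ξ < −1, let s be a nonzero real number, let γ₁, γ₂ be nonzero real numbers, and let n ≥ 0 be an integer. Set λ = ξ + √(ξ² − 1) (so |λ| < 1), f = √(ξ² − 1)/s, and 𝒩 = (N(ξ) + 2γ₂s·M)·N(ξ)ⁿ·(N(ξ) + 2γ₁s·M). Then det[ 𝒩·u₂(ξ) | u₁(ξ) ] = 0 if and only if (f/γ₁ − 1)·(f/γ₂ − 1) = λ^{2n+2}. -/
/-- for `ξ < −1`, with `λ = ξ + √(ξ²−1)` (so `|λ| < 1`), `f = √(ξ²−1)/s`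
and `𝒩 = (N(ξ)+2γ₂s·M)·N(ξ)ⁿ·(N(ξ)+2γ₁s·M)`, one has `det[𝒩u₂ | u₁] = 0` iff
`(f/γ₁ − 1)(f/γ₂ − 1) = λ^{2n+2}`. -/
theorem two_distant_impurities_condition (ξ : ℝ) (hξ : ξ < -1) (s : ℝ) (hs : s ≠ 0)
    (γ₁ γ₂ : ℝ) (h1 : γ₁ ≠ 0) (h2 : γ₂ ≠ 0) (n : ℕ) :
    |ξ + Real.sqrt (ξ ^ 2 - 1)| < 1 ∧
    (detCols
        (((Nmat ξ + (2 * γ₂ * s) • Mmat) * (Nmat ξ) ^ n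
            * (Nmat ξ + (2 * γ₁ * s) • Mmat)).mulVec (uvec2 ξ)) (uvec1 ξ) = 0 ↔
      (Real.sqrt (ξ ^ 2 - 1) / s / γ₁ - 1) * (Real.sqrt (ξ ^ 2 - 1) / s / γ₂ - 1)
        = (ξ + Real.sqrt (ξ ^ 2 - 1)) ^ (2 * n + 2)) := by
  have hx2 : (0:ℝ) ≤ ξ ^ 2 - 1 := by nlinarith
  set r := Real.sqrt (ξ ^ 2 - 1) with hrdef
  have hr2 : r ^ 2 = ξ ^ 2 - 1 := Real.sq_sqrt hx2
  have hrpos : 0 < r := Real.sqrt_pos.mpr (by nlinarith)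
  have hrne : r ≠ 0 := ne_of_gt hrpos
  have hmul : lam1 ξ * lam2 ξ = 1 := by
    simp only [lam1, lam2, ← hrdef]; nlinarith
  have hl1 : lam1 ξ = ξ + r := rfl
  have hl2 : lam2 ξ = ξ - r := rfl
  have hl1ne : lam1 ξ ≠ 0 := by
    intro h; rw [h, zero_mul] at hmul; exact one_ne_zero hmul.symm
  constructor
  · rw [abs_lt]
    constructor <;> nlinarith [hmul, hl1, hl2]
  have hstep : ∀ (a b₁ b₂ : ℝ), (Nmat ξ + a • Mmat).mulVec (b₁ • uvec1 ξ + b₂ • uvec2 ξ)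
      = (lam1 ξ * b₁ + a * (b₁ + b₂) * lam1 ξ / (2*r)) • uvec1 ξ
        + (lam2 ξ * b₂ - a * (b₁ + b₂) * lam2 ξ / (2*r)) • uvec2 ξ := by
    intro a b₁ b₂
    funext i
    fin_cases i <;>
      simp [Nmat, Mmat, uvec1, uvec2, Matrix.mulVec, dotProduct, Fin.sum_univ_two,
        Pi.add_apply, Pi.smul_apply, smul_eq_mul]
    · rw [hl1, hl2]; field_simp
      ring
    · rw [hl1, hl2]; field_simp
      linear_combination (2*r*(b₁+b₂)) * hr2
  have hkey : ∀ (m : ℕ) (b₁ b₂ : ℝ), ((Nmat ξ)^m).mulVec (b₁ • uvec1 ξ + b₂ • uvec2 ξ)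
      = ((lam1 ξ)^m * b₁) • uvec1 ξ + ((lam2 ξ)^m * b₂) • uvec2 ξ := by
    intro m
    induction m with
    | zero => intro b₁ b₂; simp
    | succ k ih =>
      intro b₁ b₂
      rw [pow_succ', ← Matrix.mulVec_mulVec, ih]
      have h0 := hstep 0 ((lam1 ξ)^k * b₁) ((lam2 ξ)^k * b₂)
      simp only [zero_smul, add_zero, zero_mul, zero_div, zero_add, sub_zero, mul_zero,
        zero_mul] at h0
      rw [h0]
      congr 1 <;> · congr 1; ring
  have hdet : ∀ d₁ d₂ : ℝ, detCols (d₁ • uvec1 ξ + d₂ • uvec2 ξ) (uvec1 ξ) = -2*r*d₂ := by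
    intro d₁ d₂
    simp [detCols, uvec1, uvec2, Matrix.det_fin_two_of, lam1, lam2, ← hrdef]
    ring
  have hu2 : uvec2 ξ = (0:ℝ) • uvec1 ξ + (1:ℝ) • uvec2 ξ := by simp
  rw [← Matrix.mulVec_mulVec, ← Matrix.mulVec_mulVec, hu2, hstep, hkey, hstep, hdet]
  set P := lam1 ξ
  set Q := lam2 ξ
  set a₁ := 2 * γ₁ * s with ha1
  set a₂ := 2 * γ₂ * s with ha2
  set c₁ := P ^ n * (P * 0 + a₁ * (0 + 1) * P / (2 * r)) with hc1
  set c₂ := Q ^ n * (Q * 1 - a₁ * (0 + 1) * Q / (2 * r)) with hc2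
  set D := Q * c₂ - a₂ * (c₁ + c₂) * Q / (2 * r) with hD
  have hpowmul : P ^ (n+2) * Q ^ (n+2) = 1 := by
    rw [← mul_pow, hmul, one_pow]
  have hA : D * (4 * r^2) = Q^(n+2) * (2*r - a₁) * (2*r - a₂) - a₁ * a₂ * Q * P^(n+1) := by
    rw [hD, hc1, hc2]
    field_simp
    ring
  have hident : (2*r - a₁) * (2*r - a₂) - a₁ * a₂ * P ^ (2*n+2)
      = D * (4 * r^2 * P^(n+2)) := by
    linear_combination (-(P^(n+2))) * hA - ((2*r-a₁)*(2*r-a₂)) * hpowmul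
      + (a₁*a₂*P^(2*n+2)) * hmul
  have hkne : (4 * r^2 * P^(n+2)) ≠ 0 :=
    mul_ne_zero (by positivity) (pow_ne_zero _ hl1ne)
  have hDiff : D = 0 ↔ (r / s / γ₁ - 1) * (r / s / γ₂ - 1) = P ^ (2*n+2) := by
    constructor
    · intro h
      have h0 : (2*r - a₁) * (2*r - a₂) - a₁ * a₂ * P ^ (2*n+2) = 0 := by
        rw [hident, h, zero_mul]
      have h0' : ((r / s / γ₁ - 1) * (r / s / γ₂ - 1) - P ^ (2*n+2)) * (4 * (s*γ₁) * (s*γ₂))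
          = 0 := by
        rw [← h0, ha1, ha2]; field_simp; ring
      have hk2 : (4 * (s*γ₁) * (s*γ₂) : ℝ) ≠ 0 := by
        apply mul_ne_zero (mul_ne_zero (by norm_num) (mul_ne_zero hs h1)) (mul_ne_zero hs h2)
      have := (mul_eq_zero.mp h0').resolve_right hk2
      linarith [sub_eq_zero.mp this]
    · intro h
      have h0 : (2*r - a₁) * (2*r - a₂) - a₁ * a₂ * P ^ (2*n+2) = 0 := by
        rw [ha1, ha2]
        have hh : (r / s / γ₁ - 1) * (r / s / γ₂ - 1) - P ^ (2*n+2) = 0 := by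
          rw [sub_eq_zero]; exact h
        field_simp at hh
        linear_combination (4:ℝ) * hh
      have := hident.symm.trans h0
      exact (mul_eq_zero.mp this).resolve_right hkne
  have hP : P = ξ + r := hl1
  rw [← hP]
  constructor
  · intro h
    have hD0 : D = 0 := by
      rcases mul_eq_zero.mp h with h' | h'
      · exact absurd h' (by nlinarith)
      · exact h'
    exact hDiff.mp hD0
  · intro h
    rw [hDiff.mpr h, mul_zero]
end

section
/- Let A ∈ ℝ with cos(Aπ) ≠ 0, let k > 0 with sin(kπ) ≠ 0, and let (α_j)_{j∈ℤ} be real numbers. Suppose ψ, φ : ℝ → ℂ are continuous, and for every j ∈ ℤ: ψ and φ are twice differentiable on the open interval (jπ, (j+1)π) where they satisfy ψ″ + 2iAψ′ + (k² − A²)ψ = 0 and φ″ − 2iAφ′ + (k² − A²)φ = 0; the one-sided derivatives ψ′(jπ⁺), ψ′(jπ⁻), φ′(jπ⁺), φ′(jπ⁻) exist; ψ(jπ) = φ(jπ); and ψ′(jπ⁺) + φ′(jπ⁺) − ψ′(jπ⁻) − φ′(jπ⁻) = α_j·ψ(jπ). Then for every j ∈ ℤ: ψ((j+1)π) + ψ((j−1)π)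 = 2·ξ_j(k)·ψ(jπ), where ξ_j(k) = (1/cos(Aπ))(cos(kπ) + (α_j/(4k))·sin(kπ)). -/
/-!
On each cell `(jπ, (j+1)π)` the gauge transformation `u = e^{iBx} w` turns
`w'' + 2iBw' + (k² - B²)w = 0` into `u'' + k²u = 0`. Its solutions are explicit, which yields the
transfer relations `e^{iAπ} ψ_{j+1} = ψ_j cos kπ + (ψ'(jπ⁺) + iAψ_j) sin kπ / k` and
`e^{-iAπ} ψ_{j-1} = ψ_j cos kπ - (ψ'(jπ⁻) + iAψ_j) sin kπ / k`, and the same for `φ` with `-A`.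
Adding the four relations, the phases combine to `2 cos Aπ` and the derivative terms to the
jump `α_j ψ_j` of the `δ`-coupling.
-/

open scoped Real
open Set Complex

section

variable {k a : ℝ}

theorem hasDerivAt_ofReal_cos_mul_sub (x : ℝ) :
    HasDerivAt (fun x : ℝ ↦ (Real.cos (k * (x - a)) : ℂ)) (-k * Real.sin (k * (x - a))) x := by
  have h : HasDerivAt (fun x ↦ Real.cos (k * (x - a))) (-Real.sin (k * (x - a)) * k) x := by
    simpa using (((hasDerivAt_id x).sub_const a).const_mul k).cos
  convert h.ofReal_comp using 1
  push_cast
  ring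

theorem hasDerivAt_ofReal_sin_mul_sub (x : ℝ) :
    HasDerivAt (fun x : ℝ ↦ (Real.sin (k * (x - a)) : ℂ)) (k * Real.cos (k * (x - a))) x := by
  have h : HasDerivAt (fun x ↦ Real.sin (k * (x - a))) (Real.cos (k * (x - a)) * k) x := by
    simpa using (((hasDerivAt_id x).sub_const a).const_mul k).sin
  convert h.ofReal_comp using 1
  push_cast
  ring

end

theorem eq_of_hasDerivWithinAt_Ioi_of_eqOn_Icc {F : Type*} [NormedAddCommGroup F]
    [NormedSpace ℝ F] {u v : ℝ → F} {a b : ℝ} {D v' : F} (hab : a < b) (huv : EqOn u v (Icc a b))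
    (hu : HasDerivWithinAt u D (Ioi a) a) (hv : HasDerivAt v v' a) : D = v' := by
  refine (uniqueDiffWithinAt_Ioi a).eq_deriv _ hu
    (hv.hasDerivWithinAt.congr_of_eventuallyEq ?_ (huv ⟨le_rfl, hab.le⟩))
  filter_upwards [Icc_mem_nhdsGT hab] with x hx using huv hx

theorem eq_of_hasDerivWithinAt_Iio_of_eqOn_Icc {F : Type*} [NormedAddCommGroup F]
    [NormedSpace ℝ F] {u v : ℝ → F} {a b : ℝ} {D v' : F} (hab : a < b) (huv : EqOn u v (Icc a b))
    (hu : HasDerivWithinAt u D (Iio b) b) (hv : HasDerivAt v v' b) : D = v' := by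
  refine (uniqueDiffWithinAt_Iio b).eq_deriv _ hu
    (hv.hasDerivWithinAt.congr_of_eventuallyEq ?_ (huv ⟨hab.le, le_rfl⟩))
  filter_upwards [Icc_mem_nhdsLT hab] with x hx using huv hx

section

variable {k a b : ℝ} {u u' : ℝ → ℂ}

theorem exists_eqOn_Icc_cos_sin (hk : k ≠ 0) (hab : a < b) (hu : ContinuousOn u (Icc a b))
    (hu₁ : ∀ x ∈ Ioo a b, HasDerivAt u (u' x) x)
    (hu₂ : ∀ x ∈ Ioo a b, HasDerivAt u' (-k ^ 2 * u x) x) :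
    ∃ P Q : ℂ, EqOn u
      (fun x ↦ P * Real.cos (k * (x - a)) + Q * Real.sin (k * (x - a))) (Icc a b) := by
  set c : ℝ → ℂ := fun x ↦ Real.cos (k * (x - a))
  set s : ℝ → ℂ := fun x ↦ Real.sin (k * (x - a))
  have hc : ∀ x, HasDerivAt c (-k * s x) x := hasDerivAt_ofReal_cos_mul_sub
  have hs : ∀ x, HasDerivAt s (k * c x) x := hasDerivAt_ofReal_sin_mul_sub
  have const_of_deriv_zero (f : ℝ → ℂ) (hf : ∀ x ∈ Ioo a b, HasDerivAt f 0 x) :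
      ∃ C, ∀ x ∈ Ioo a b, f x = C :=
    isOpen_Ioo.exists_is_const_of_deriv_eq_zero isPreconnected_Ioo
      (fun x hx ↦ (hf x hx).differentiableAt.differentiableWithinAt) (fun x hx ↦ (hf x hx).deriv)
  -- `k u c - u' s` and `k u s + u' c` are first integrals of `u'' = -k² u`
  obtain ⟨G, hG⟩ := const_of_deriv_zero (fun x ↦ k * u x * c x - u' x * s x) fun x hx ↦
    (((hu₁ x hx).const_mul (k : ℂ)).mul (hc x)).sub ((hu₂ x hx).mul (hs x)) |>.congr_deriv (by ring)
  obtain ⟨H, hH⟩ := const_of_deriv_zero (fun x ↦ k * u x * s x + u' x * c x) fun x hx ↦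
    (((hu₁ x hx).const_mul (k : ℂ)).mul (hs x)).add ((hu₂ x hx).mul (hc x)) |>.congr_deriv (by ring)
  refine ⟨G / k, H / k, EqOn.of_subset_closure (fun x hx ↦ ?_) hu (by fun_prop)
    Ioo_subset_Icc_self (by rw [closure_Ioo hab.ne])⟩
  have hcs : c x ^ 2 + s x ^ 2 = 1 := by
    simp only [c, s]; exact_mod_cast Real.cos_sq_add_sin_sq (k * (x - a))
  rw [div_mul_eq_mul_div, div_mul_eq_mul_div, ← add_div, eq_div_iff (ofReal_ne_zero.mpr hk)]
  linear_combination c x * hG x hx + s x * hH x hx - k * u x * hcs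

theorem transfer_harmonic (hk : k ≠ 0) (hab : a < b)
    (hu : ContinuousOn u (Icc a b)) (hu₁ : ∀ x ∈ Ioo a b, HasDerivAt u (u' x) x)
    (hu₂ : ∀ x ∈ Ioo a b, HasDerivAt u' (-k ^ 2 * u x) x) {Da Db : ℂ}
    (hDa : HasDerivWithinAt u Da (Ioi a) a) (hDb : HasDerivWithinAt u Db (Iio b) b) :
    u b = u a * Real.cos (k * (b - a)) + Da / k * Real.sin (k * (b - a)) ∧
      u a = u b * Real.cos (k * (b - a)) - Db / k * Real.sin (k * (b - a)) := by
  obtain ⟨P, Q, huv⟩ := exists_eqOn_Icc_cos_sin hk hab hu hu₁ hu₂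
  have hv (x : ℝ) : HasDerivAt
      (fun x ↦ P * Real.cos (k * (x - a)) + Q * Real.sin (k * (x - a)))
      (k * (-P * Real.sin (k * (x - a)) + Q * Real.cos (k * (x - a)))) x :=
    ((hasDerivAt_ofReal_cos_mul_sub x).const_mul P).add
      ((hasDerivAt_ofReal_sin_mul_sub x).const_mul Q) |>.congr_deriv (by ring)
  have hDa' := eq_of_hasDerivWithinAt_Ioi_of_eqOn_Icc hab huv hDa (hv a)
  have hDb' := eq_of_hasDerivWithinAt_Iio_of_eqOn_Icc hab huv hDb (hv b)
  have hua := huv ⟨le_rfl, hab.le⟩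
  have hub := huv ⟨hab.le, le_rfl⟩
  have hcs : (Real.cos (k * (b - a)) : ℂ) ^ 2 + (Real.sin (k * (b - a)) : ℂ) ^ 2 = 1 := by
    exact_mod_cast Real.cos_sq_add_sin_sq (k * (b - a))
  have hkC : (k : ℂ) ≠ 0 := ofReal_ne_zero.mpr hk
  simp only [sub_self, mul_zero, Real.cos_zero, Real.sin_zero, ofReal_one, ofReal_zero]
    at hua hub hDa' hDb'
  rw [hua, hub, hDa', hDb']
  constructor
  · field_simp
    ring
  · field_simp
    linear_combination (-P) * hcs

end

section

variable {k B a b : ℝ} {w : ℝ → ℂ}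

theorem hasDerivAt_exp_ofReal_mul_I (x : ℝ) :
    HasDerivAt (fun x : ℝ ↦ exp (↑(B * x) * I)) (I * B * exp (↑(B * x) * I)) x := by
  have h : HasDerivAt (fun x : ℝ ↦ ((B * x : ℝ) : ℂ)) B x := by
    simpa using ((hasDerivAt_id x).const_mul B).ofReal_comp
  exact (h.mul_const I).cexp.congr_deriv (by ring)

theorem transfer_gauged (hk : k ≠ 0) (hab : a < b) (hw : ContinuousOn w (Icc a b))
    (hode : ∀ x ∈ Ioo a b, DifferentiableAt ℝ w x ∧ DifferentiableAt ℝ (deriv w) x ∧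
      deriv (deriv w) x + 2 * I * B * deriv w x + ((k ^ 2 - B ^ 2 : ℝ) : ℂ) * w x = 0)
    {Da Db : ℂ} (hDa : HasDerivWithinAt w Da (Ioi a) a)
    (hDb : HasDerivWithinAt w Db (Iio b) b) :
    exp (↑(B * (b - a)) * I) * w b
        = w a * Real.cos (k * (b - a)) + (Da + I * B * w a) / k * Real.sin (k * (b - a)) ∧
      exp (-↑(B * (b - a)) * I) * w a
        = w b * Real.cos (k * (b - a)) - (Db + I * B * w b) / k * Real.sin (k * (b - a)) := by
  set E : ℝ → ℂ := fun x ↦ exp (↑(B * x) * I)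
  have hE : ∀ x, HasDerivAt E (I * B * E x) x := hasDerivAt_exp_ofReal_mul_I
  have hu₁ : ∀ x ∈ Ioo a b, HasDerivAt (fun x ↦ E x * w x) (E x * (deriv w x + I * B * w x)) x :=
    fun x hx ↦ ((hE x).mul (hode x hx).1.hasDerivAt).congr_deriv (by ring)
  have hu₂ : ∀ x ∈ Ioo a b, HasDerivAt (fun x ↦ E x * (deriv w x + I * B * w x))
      (-k ^ 2 * (E x * w x)) x := by
    intro x hx
    obtain ⟨hw₁, hw₂, hw₃⟩ := hode x hx
    refine ((hE x).mul (hw₂.hasDerivAt.add (hw₁.hasDerivAt.const_mul (I * B)))).congr_deriv ?_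
    push_cast at hw₃ ⊢
    simp only [Pi.add_apply]
    linear_combination E x * hw₃ + B ^ 2 * E x * w x * I_sq
  have hua : HasDerivWithinAt (fun x ↦ E x * w x) (E a * (Da + I * B * w a)) (Ioi a) a :=
    ((hE a).hasDerivWithinAt.mul hDa).congr_deriv (by ring)
  have hub : HasDerivWithinAt (fun x ↦ E x * w x) (E b * (Db + I * B * w b)) (Iio b) b :=
    ((hE b).hasDerivWithinAt.mul hDb).congr_deriv (by ring)
  have hE_cont : Continuous E := by fun_prop
  obtain ⟨h_fwd, h_bwd⟩ := transfer_harmonic hk hab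
    (hE_cont.continuousOn.mul hw) hu₁ hu₂ hua hub
  simp only [Pi.mul_apply] at h_fwd h_bwd
  have hEb : E b = E a * exp (↑(B * (b - a)) * I) := by
    simp only [E, ← exp_add]; congr 1; push_cast; ring
  have hEa : E a = E b * exp (-↑(B * (b - a)) * I) := by
    simp only [E, ← exp_add]; congr 1; push_cast; ring
  constructor
  · refine mul_left_cancel₀ (exp_ne_zero _ : E a ≠ 0) ?_
    linear_combination h_fwd - w b * hEb
  · refine mul_left_cancel₀ (exp_ne_zero _ : E b ≠ 0) ?_
    linear_combination h_bwd - w a * hEa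

end

theorem transfer_gauged_cell {k B : ℝ} (hk : k ≠ 0) {w : ℝ → ℂ} (hw : Continuous w)
    (hode : ∀ j : ℤ, ∀ x ∈ Ioo ((j : ℝ) * π) (((j : ℝ) + 1) * π),
      DifferentiableAt ℝ w x ∧ DifferentiableAt ℝ (deriv w) x ∧
      deriv (deriv w) x + 2 * I * B * deriv w x + ((k ^ 2 - B ^ 2 : ℝ) : ℂ) * w x = 0)
    {Dp Dm : ℤ → ℂ}
    (hp : ∀ j : ℤ, HasDerivWithinAt w (Dp j) (Ioi ((j : ℝ) * π)) ((j : ℝ) * π))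
    (hm : ∀ j : ℤ, HasDerivWithinAt w (Dm j) (Iio ((j : ℝ) * π)) ((j : ℝ) * π)) (j : ℤ) :
    exp (↑(B * π) * I) * w ((j + 1) * π)
        = w (j * π) * Real.cos (k * π) + (Dp j + I * B * w (j * π)) / k * Real.sin (k * π) ∧
      exp (-(↑(B * π) * I)) * w ((j - 1) * π)
        = w (j * π) * Real.cos (k * π) - (Dm j + I * B * w (j * π)) / k * Real.sin (k * π) := by
  have hcell (x : ℝ) : x < x + π := by linarith [Real.pi_pos]
  constructor
  · have h := (transfer_gauged hk (by linarith [hcell (j * π)]) hw.continuousOn (hode j) (hp j)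
      (by exact_mod_cast hm (j + 1))).1
    rwa [show ((j : ℝ) + 1) * π - j * π = π by ring] at h
  · have hode' := hode (j - 1)
    simp only [Int.cast_sub, Int.cast_one, sub_add_cancel] at hode'
    have hlt : ((j : ℝ) - 1) * π < j * π := by linarith [hcell ((j - 1) * π)]
    have h := (transfer_gauged (B := B) hk hlt hw.continuousOn hode'
      (by exact_mod_cast hp (j - 1)) (hm j)).2
    rwa [show (j : ℝ) * π - (j - 1) * π = π by ring, neg_mul] at h

theorem discrete_eq_of_transfer {A k a : ℝ} (hA : Real.cos (A * π) ≠ 0) (hk : k ≠ 0)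
    {ψ₀ ψ₁ ψ₂ Dψp Dψm Dφp Dφm : ℂ}
    (hψ_next : exp (↑(A * π) * I) * ψ₂
      = ψ₁ * Real.cos (k * π) + (Dψp + I * A * ψ₁) / k * Real.sin (k * π))
    (hψ_prev : exp (-(↑(A * π) * I)) * ψ₀
      = ψ₁ * Real.cos (k * π) - (Dψm + I * A * ψ₁) / k * Real.sin (k * π))
    (hφ_next : exp (-(↑(A * π) * I)) * ψ₂
      = ψ₁ * Real.cos (k * π) + (Dφp - I * A * ψ₁) / k * Real.sin (k * π))
    (hφ_prev : exp (↑(A * π) * I) * ψ₀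
      = ψ₁ * Real.cos (k * π) - (Dφm - I * A * ψ₁) / k * Real.sin (k * π))
    (hδ : Dψp + Dφp - Dψm - Dφm = a * ψ₁) :
    ψ₂ + ψ₀ = 2 * ((1 / Real.cos (A * π)
      * (Real.cos (k * π) + a / (4 * k) * Real.sin (k * π)) : ℝ) : ℂ) * ψ₁ := by
  have hkC : (k : ℂ) ≠ 0 := ofReal_ne_zero.mpr hk
  have hAC : (Real.cos (A * π) : ℂ) ≠ 0 := ofReal_ne_zero.mpr hA
  have h_cos : exp (↑(A * π) * I) + exp (-(↑(A * π) * I)) = 2 * Real.cos (A * π) := by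
    rw [ofReal_cos, two_cos, neg_mul]
  have h_sum : 2 * Real.cos (A * π) * (ψ₂ + ψ₀) * k
      = (4 * Real.cos (k * π) * k + a * Real.sin (k * π)) * ψ₁ := by
    linear_combination (norm := (field_simp; ring)) k * (hψ_next + hφ_next + hψ_prev + hφ_prev)
      - k * (ψ₂ + ψ₀) * h_cos + Real.sin (k * π) * hδ
  set ξ : ℝ := 1 / Real.cos (A * π) * (Real.cos (k * π) + a / (4 * k) * Real.sin (k * π))
  have h_ξ : (2 * ξ * (2 * Real.cos (A * π) * k) : ℂ)
      = 4 * Real.cos (k * π) * k + a * Real.sin (k * π) := by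
    norm_cast
    simp only [ξ]
    field_simp
    ring
  refine mul_left_cancel₀ (mul_ne_zero (mul_ne_zero two_ne_zero hAC) hkC) ?_
  linear_combination h_sum - ψ₁ * h_ξ

theorem duality_forward_general (A : ℝ) (hA : Real.cos (A * π) ≠ 0) (k : ℝ) (hk : 0 < k)
    (α : ℤ → ℝ) (ψ φ : ℝ → ℂ)
    (hψc : Continuous ψ) (hφc : Continuous φ)
    (hψode : ∀ j : ℤ, ∀ x ∈ Set.Ioo ((j : ℝ) * π) (((j : ℝ) + 1) * π),
      DifferentiableAt ℝ ψ x ∧ DifferentiableAt ℝ (deriv ψ) x ∧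
      deriv (deriv ψ) x + 2 * Complex.I * (A : ℂ) * deriv ψ x
        + ((k ^ 2 - A ^ 2 : ℝ) : ℂ) * ψ x = 0)
    (hφode : ∀ j : ℤ, ∀ x ∈ Set.Ioo ((j : ℝ) * π) (((j : ℝ) + 1) * π),
      DifferentiableAt ℝ φ x ∧ DifferentiableAt ℝ (deriv φ) x ∧
      deriv (deriv φ) x - 2 * Complex.I * (A : ℂ) * deriv φ x
        + ((k ^ 2 - A ^ 2 : ℝ) : ℂ) * φ x = 0)
    (Dψp Dψm Dφp Dφm : ℤ → ℂ)
    (hψp : ∀ j : ℤ, HasDerivWithinAt ψ (Dψp j) (Set.Ioi ((j : ℝ) * π)) ((j : ℝ) * π))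
    (hψm : ∀ j : ℤ, HasDerivWithinAt ψ (Dψm j) (Set.Iio ((j : ℝ) * π)) ((j : ℝ) * π))
    (hφp : ∀ j : ℤ, HasDerivWithinAt φ (Dφp j) (Set.Ioi ((j : ℝ) * π)) ((j : ℝ) * π))
    (hφm : ∀ j : ℤ, HasDerivWithinAt φ (Dφm j) (Set.Iio ((j : ℝ) * π)) ((j : ℝ) * π))
    (hmatch : ∀ j : ℤ, ψ ((j : ℝ) * π) = φ ((j : ℝ) * π))
    (hδ : ∀ j : ℤ, Dψp j + Dφp j - Dψm j - Dφm j = (α j : ℂ) * ψ ((j : ℝ) * π)) :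
    ∀ j : ℤ, ψ (((j : ℝ) + 1) * π) + ψ (((j : ℝ) - 1) * π)
      = 2 * (((1 / Real.cos (A * π))
          * (Real.cos (k * π) + α j / (4 * k) * Real.sin (k * π)) : ℝ) : ℂ)
        * ψ ((j : ℝ) * π) := by
  intro j
  have hφode' : ∀ i : ℤ, ∀ x ∈ Ioo ((i : ℝ) * π) (((i : ℝ) + 1) * π),
      DifferentiableAt ℝ φ x ∧ DifferentiableAt ℝ (deriv φ) x ∧ deriv (deriv φ) x
        + 2 * I * ((-A : ℝ) : ℂ) * deriv φ x + ((k ^ 2 - (-A) ^ 2 : ℝ) : ℂ) * φ x = 0 :=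
    fun i x hx ↦ (hφode i x hx).imp_right <| .imp_right fun h ↦ by
      push_cast at h ⊢
      linear_combination h
  obtain ⟨ψ_next, ψ_prev⟩ := transfer_gauged_cell hk.ne' hψc hψode hψp hψm j
  obtain ⟨φ_next, φ_prev⟩ := transfer_gauged_cell hk.ne' hφc hφode' hφp hφm j
  have h_next : φ ((j + 1) * π) = ψ ((j + 1) * π) := by exact_mod_cast (hmatch (j + 1)).symm
  have h_prev : φ ((j - 1) * π) = ψ ((j - 1) * π) := by exact_mod_cast (hmatch (j - 1)).symm
  rw [← hmatch j, h_next] at φ_next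
  rw [← hmatch j, h_prev] at φ_prev
  simp only [neg_mul, ofReal_neg, mul_neg, neg_neg, ← sub_eq_add_neg] at φ_next φ_prev
  exact discrete_eq_of_transfer hA hk.ne' ψ_next ψ_prev φ_next φ_prev (hδ j)

/-- duality, forward direction.  If `ψ` (upper halfcircles, potential `−A`)
and `φ` (lower halfcircles, potential `A`) are continuous, satisfy the gauged eigenvalue
equations at energy `k²` on each interval `(jπ, (j+1)π)`, have one-sided derivatives at
the vertices `jπ`, agree at the vertices and satisfy the `δ`-coupling of strength `α_j`
there, then the vertex values satisfy the discrete equation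
`ψ((j+1)π) + ψ((j−1)π) = 2ξ_j(k)·ψ(jπ)`. -/
theorem duality_forward (A : ℝ) (hA : Real.cos (A * π) ≠ 0) (k : ℝ) (hk : 0 < k)
    (hks : Real.sin (k * π) ≠ 0) (α : ℤ → ℝ) (ψ φ : ℝ → ℂ)
    (hψc : Continuous ψ) (hφc : Continuous φ)
    (hψode : ∀ j : ℤ, ∀ x ∈ Set.Ioo ((j : ℝ) * π) (((j : ℝ) + 1) * π),
      DifferentiableAt ℝ ψ x ∧ DifferentiableAt ℝ (deriv ψ) x ∧
      deriv (deriv ψ) x + 2 * Complex.I * (A : ℂ) * deriv ψ x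
        + ((k ^ 2 - A ^ 2 : ℝ) : ℂ) * ψ x = 0)
    (hφode : ∀ j : ℤ, ∀ x ∈ Set.Ioo ((j : ℝ) * π) (((j : ℝ) + 1) * π),
      DifferentiableAt ℝ φ x ∧ DifferentiableAt ℝ (deriv φ) x ∧
      deriv (deriv φ) x - 2 * Complex.I * (A : ℂ) * deriv φ x
        + ((k ^ 2 - A ^ 2 : ℝ) : ℂ) * φ x = 0)
    (Dψp Dψm Dφp Dφm : ℤ → ℂ)
    (hψp : ∀ j : ℤ, HasDerivWithinAt ψ (Dψp j) (Set.Ioi ((j : ℝ) * π)) ((j : ℝ) * π))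
    (hψm : ∀ j : ℤ, HasDerivWithinAt ψ (Dψm j) (Set.Iio ((j : ℝ) * π)) ((j : ℝ) * π))
    (hφp : ∀ j : ℤ, HasDerivWithinAt φ (Dφp j) (Set.Ioi ((j : ℝ) * π)) ((j : ℝ) * π))
    (hφm : ∀ j : ℤ, HasDerivWithinAt φ (Dφm j) (Set.Iio ((j : ℝ) * π)) ((j : ℝ) * π))
    (hmatch : ∀ j : ℤ, ψ ((j : ℝ) * π) = φ ((j : ℝ) * π))
    (hδ : ∀ j : ℤ, Dψp j + Dφp j - Dψm j - Dφm j = (α j : ℂ) * ψ ((j : ℝ) * π)) :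
    ∀ j : ℤ, ψ (((j : ℝ) + 1) * π) + ψ (((j : ℝ) - 1) * π)
      = 2 * (((1 / Real.cos (A * π))
          * (Real.cos (k * π) + α j / (4 * k) * Real.sin (k * π)) : ℝ) : ℂ)
        * ψ ((j : ℝ) * π) :=
  duality_forward_general A hA k hk α ψ φ hψc hφc hψode hφode Dψp Dψm Dφp Dφm hψp hψm hφp hφm hmatch
    hδ
end

section
/- Let A ∈ ℝ with cos(Aπ) ≠ 0, let k > 0 with sin(kπ) ≠ 0, let (α_j)_{j∈ℤ} be real numbers, set ξ_j(k) = (1/cos(Aπ))(cos(kπ) + (α_j/(4k))·sin(kπ)), and let (a_j)_{j∈ℤ} be complex numbers satisfying a_{j+1} + a_{j−1} = 2·ξ_j(k)·a_j for all j ∈ ℤ. Define ψ, φ : ℝ → ℂ by setting, for x ∈ [jπ, (j+1)π): ψ(x) = e^{−iA(x−jπ)}·[ a_j·cos(k(x−jπ)) + (a_{j+1}e^{iAπ} − a_j·cos(kπ))·sin(k(x−jπ))/sin(kπ) ] and φ(x) = e^{iA(x−jπ)}·[ a_j·cos(k(x−jπ)) + (a_{j+1}e^{−iAπ} − a_j·cos(kπ))·sin(k(x−jπ))/sin(kπ)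 ]. Then ψ and φ are continuous on ℝ with ψ(jπ) = φ(jπ) = a_j for all j; on each open interval (jπ, (j+1)π) they satisfy ψ″ + 2iAψ′ + (k² − A²)ψ = 0 and φ″ − 2iAφ′ + (k² − A²)φ = 0; and at every j ∈ ℤ the one-sided derivatives exist and satisfy ψ′(jπ⁺) + φ′(jπ⁺) − ψ′(jπ⁻) − φ′(jπ⁻) = α_j·a_j. -/
/-!
On an edge, with `u = x - jπ`, the formula for `ψ` is `e^{-iAu} (a_j cos ku + C_j sin ku)`, and
`φ` is the same formula with `A` replaced by `-A`. Such a wave solves the gauged equation, and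
`C_j` is chosen so that it takes the value `a_{j+1}` at the right end of the edge: this gives
continuity. At a vertex the `A`-terms of the two one-sided derivatives of `ψ` cancel, leaving
the jump `k / sin kπ · (a_{j+1} e^{iAπ} + a_{j-1} e^{-iAπ} - 2 a_j cos kπ)`. Adding the jump of
`φ`, the exponentials combine to `2 cos Aπ`, and the difference equation turns the sum into
`α_j a_j`.
-/

open scoped Real

/-- The upper-halfcircle component reconstructed on `[jπ, (j+1)π)` from vertex values. -/
noncomputable def psiRec (A k : ℝ) (a : ℤ → ℂ) (j : ℤ) (x : ℝ) : ℂ :=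
  Complex.exp (-(Complex.I) * ((A * (x - (j : ℝ) * π) : ℝ) : ℂ)) *
    (a j * ((Real.cos (k * (x - (j : ℝ) * π)) : ℝ) : ℂ) +
      (a (j + 1) * Complex.exp (Complex.I * ((A * π : ℝ) : ℂ))
          - a j * ((Real.cos (k * π) : ℝ) : ℂ)) *
        ((Real.sin (k * (x - (j : ℝ) * π)) / Real.sin (k * π) : ℝ) : ℂ))

/-- The lower-halfcircle component reconstructed on `[jπ, (j+1)π)` from vertex values. -/
noncomputable def phiRec (A k : ℝ) (a : ℤ → ℂ) (j : ℤ) (x : ℝ) : ℂ :=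
  Complex.exp (Complex.I * ((A * (x - (j : ℝ) * π) : ℝ) : ℂ)) *
    (a j * ((Real.cos (k * (x - (j : ℝ) * π)) : ℝ) : ℂ) +
      (a (j + 1) * Complex.exp (-(Complex.I) * ((A * π : ℝ) : ℂ))
          - a j * ((Real.cos (k * π) : ℝ) : ℂ)) *
        ((Real.sin (k * (x - (j : ℝ) * π)) / Real.sin (k * π) : ℝ) : ℂ))

open Filter Topology Set Complex

lemma exists_int_mem_Ico_mul {L : ℝ} (hL : 0 < L) (x : ℝ) :
    ∃ j : ℤ, x ∈ Ico ((j : ℝ) * L) (((j : ℝ) + 1) * L) :=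
  ⟨⌊x / L⌋, (le_div_iff₀ hL).1 (Int.floor_le _),
    (div_lt_iff₀ hL).1 (Int.lt_floor_add_one _)⟩

lemma exists_int_mem_Ioc_mul {L : ℝ} (hL : 0 < L) (x : ℝ) :
    ∃ j : ℤ, x ∈ Ioc ((j : ℝ) * L) (((j : ℝ) + 1) * L) := by
  refine ⟨⌈x / L⌉ - 1, ?_, ?_⟩
  · have := Int.ceil_lt_add_one (x / L)
    rw [Int.cast_sub, Int.cast_one, ← lt_div_iff₀ hL]
    linarith
  · rw [Int.cast_sub, Int.cast_one, sub_add_cancel, ← div_le_iff₀ hL]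
    exact Int.le_ceil _

def PiecewiseIco {E : Type*} (L : ℝ) (g : ℤ → ℝ → E) (f : ℝ → E) : Prop :=
  ∀ j : ℤ, ∀ x ∈ Ico ((j : ℝ) * L) (((j : ℝ) + 1) * L), f x = g j x

namespace PiecewiseIco

variable {E : Type*} {L : ℝ} {g : ℤ → ℝ → E} {f : ℝ → E}

lemma apply_int_mul (hL : 0 < L) (hf : PiecewiseIco L g f) (j : ℤ) : f (j * L) = g j (j * L) :=
  hf j _ ⟨le_rfl, by linarith⟩

lemma eqOn_Icc (hL : 0 < L) (hf : PiecewiseIco L g f)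
    (hg : ∀ j : ℤ, g j (((j : ℝ) + 1) * L) = g (j + 1) (((j : ℝ) + 1) * L)) (j : ℤ) :
    EqOn f (g j) (Icc ((j : ℝ) * L) (((j : ℝ) + 1) * L)) := by
  intro x hx
  rcases hx.2.lt_or_eq with hlt | rfl
  · exact hf j x ⟨hx.1, hlt⟩
  · rw [hg j]
    exact_mod_cast hf.apply_int_mul hL (j + 1)

lemma eventuallyEq_nhds (hf : PiecewiseIco L g f) {j : ℤ} {x : ℝ}
    (hx : x ∈ Ioo ((j : ℝ) * L) (((j : ℝ) + 1) * L)) : f =ᶠ[𝓝 x] g j :=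
  eventually_of_mem (Ioo_mem_nhds hx.1 hx.2) fun y hy => hf j y ⟨hy.1.le, hy.2⟩

lemma eventuallyEq_nhdsGE (hf : PiecewiseIco L g f) {j : ℤ} {x : ℝ}
    (hx : x ∈ Ico ((j : ℝ) * L) (((j : ℝ) + 1) * L)) : f =ᶠ[𝓝[≥] x] g j :=
  eventually_of_mem (Ico_mem_nhdsGE hx.2) fun y hy => hf j y ⟨hx.1.trans hy.1, hy.2⟩

lemma eventuallyEq_nhdsLE (hL : 0 < L) (hf : PiecewiseIco L g f)
    (hg : ∀ j : ℤ, g j (((j : ℝ) + 1) * L) = g (j + 1) (((j : ℝ) + 1) * L))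
    {j : ℤ} {x : ℝ} (hx : x ∈ Ioc ((j : ℝ) * L) (((j : ℝ) + 1) * L)) :
    f =ᶠ[𝓝[≤] x] g j :=
  eventually_of_mem (Ioc_mem_nhdsLE hx.1) fun _ hy =>
    hf.eqOn_Icc hL hg j ⟨hy.1.le, hy.2.trans hx.2⟩

lemma continuous [TopologicalSpace E] (hL : 0 < L) (hf : PiecewiseIco L g f)
    (hg : ∀ j : ℤ, g j (((j : ℝ) + 1) * L) = g (j + 1) (((j : ℝ) + 1) * L))
    (hgc : ∀ j, Continuous (g j)) : Continuous f := by
  refine continuous_iff_continuousAt.2 fun x =>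
    continuousAt_iff_continuous_left_right.2 ⟨?_, ?_⟩
  · obtain ⟨j, hj⟩ := exists_int_mem_Ioc_mul hL x
    exact (hgc j).continuousWithinAt.congr_of_eventuallyEq_of_mem
      (hf.eventuallyEq_nhdsLE hL hg hj) self_mem_Iic
  · obtain ⟨j, hj⟩ := exists_int_mem_Ico_mul hL x
    exact (hgc j).continuousWithinAt.congr_of_eventuallyEq_of_mem
      (hf.eventuallyEq_nhdsGE hj) self_mem_Ici

variable [NormedAddCommGroup E] [NormedSpace ℝ E]

lemma hasDerivWithinAt_Ioi (hL : 0 < L) (hf : PiecewiseIco L g f)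
    (hgd : ∀ j, Differentiable ℝ (g j)) (j : ℤ) :
    HasDerivWithinAt f (deriv (g j) (j * L)) (Ioi (j * L)) (j * L) :=
  (hgd j _).hasDerivAt.hasDerivWithinAt.congr_of_eventuallyEq
    ((hf.eventuallyEq_nhdsGE ⟨le_rfl, by linarith⟩).filter_mono
      (nhdsWithin_mono _ Ioi_subset_Ici_self)) (hf.apply_int_mul hL j)

lemma hasDerivWithinAt_Iio (hL : 0 < L) (hf : PiecewiseIco L g f)
    (hg : ∀ j : ℤ, g j (((j : ℝ) + 1) * L) = g (j + 1) (((j : ℝ) + 1) * L))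
    (hgd : ∀ j, Differentiable ℝ (g j)) (j : ℤ) :
    HasDerivWithinAt f (deriv (g (j - 1)) (j * L)) (Iio (j * L)) (j * L) := by
  have hmem :
      (j : ℝ) * L ∈ Ioc (((j - 1 : ℤ) : ℝ) * L) ((((j - 1 : ℤ) : ℝ) + 1) * L) := by
    push_cast
    constructor <;> linarith
  have hloc := hf.eventuallyEq_nhdsLE hL hg hmem
  exact (hgd _ _).hasDerivAt.hasDerivWithinAt.congr_of_eventuallyEq
    (hloc.filter_mono (nhdsWithin_mono _ Iio_subset_Iic_self))
    (hloc.eq_of_nhdsWithin self_mem_Iic)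

end PiecewiseIco

noncomputable def gaugedWave (μ k : ℝ) (B C : ℂ) (u : ℝ) : ℂ :=
  exp (I * μ * u) * (B * cos (k * u) + C * sin (k * u))

section GaugedWave

variable (μ k : ℝ) (B C : ℂ)

lemma hasDerivAt_gaugedWave (u : ℝ) :
    HasDerivAt (gaugedWave μ k B C)
      (gaugedWave μ k (I * μ * B + k * C) (I * μ * C - k * B) u) u := by
  have hlin (c : ℂ) : HasDerivAt (fun z : ℂ => c * z) c u := by
    simpa using (hasDerivAt_id (u : ℂ)).const_mul c
  have h := ((hlin (I * μ)).cexp.mul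
    (((hlin k).ccos.const_mul B).add ((hlin k).csin.const_mul C))).comp_ofReal
  convert h using 1
  · rfl
  · simp only [gaugedWave, Pi.add_apply]
    ring

lemma differentiable_gaugedWave : Differentiable ℝ (gaugedWave μ k B C) :=
  fun u => (hasDerivAt_gaugedWave μ k B C u).differentiableAt

lemma deriv_gaugedWave :
    deriv (gaugedWave μ k B C) = gaugedWave μ k (I * μ * B + k * C) (I * μ * C - k * B) :=
  funext fun u => (hasDerivAt_gaugedWave μ k B C u).deriv

lemma gaugedWave_zero : gaugedWave μ k B C 0 = B := by
  simp [gaugedWave]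

lemma gaugedWave_ode (u : ℝ) :
    deriv (deriv (gaugedWave μ k B C)) u - 2 * I * μ * deriv (gaugedWave μ k B C) u
      + (k ^ 2 - μ ^ 2) * gaugedWave μ k B C u = 0 := by
  simp only [deriv_gaugedWave, gaugedWave]
  linear_combination
    (-(μ : ℂ) ^ 2 * exp (I * μ * u) * (B * cos (k * u) + C * sin (k * u))) * I_sq

end GaugedWave

lemma exp_mul_exp_neg (z : ℂ) : exp z * exp (-z) = 1 := by
  rw [← Complex.exp_add, add_neg_cancel, Complex.exp_zero]

section PsiRec

variable (A k : ℝ) (a : ℤ → ℂ) (j : ℤ)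

lemma psiRec_eq_gaugedWave :
    psiRec A k a j = fun x => gaugedWave (-A) k (a j)
      ((a (j + 1) * exp (I * A * π) - a j * Real.cos (k * π)) / Real.sin (k * π))
      (x - j * π) := by
  funext x
  simp only [psiRec, gaugedWave]
  push_cast
  ring_nf

lemma phiRec_eq_psiRec_neg : phiRec A k a = psiRec (-A) k a := by
  funext j x
  simp only [phiRec, psiRec]
  push_cast
  ring_nf

lemma differentiable_psiRec : Differentiable ℝ (psiRec A k a j) := by
  rw [psiRec_eq_gaugedWave]
  exact (differentiable_gaugedWave _ _ _ _).comp (differentiable_id.sub_const _)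

lemma differentiable_deriv_psiRec : Differentiable ℝ (deriv (psiRec A k a j)) := by
  rw [psiRec_eq_gaugedWave, funext (deriv_comp_sub_const _ _), deriv_gaugedWave]
  exact (differentiable_gaugedWave _ _ _ _).comp (differentiable_id.sub_const _)

lemma psiRec_ode (x : ℝ) :
    deriv (deriv (psiRec A k a j)) x + 2 * I * A * deriv (psiRec A k a j) x
      + ((k ^ 2 - A ^ 2 : ℝ) : ℂ) * psiRec A k a j x = 0 := by
  have h := gaugedWave_ode (-A) k (a j)
    ((a (j + 1) * exp (I * A * π) - a j * Real.cos (k * π)) / Real.sin (k * π)) (x - j * π)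
  rw [psiRec_eq_gaugedWave, funext (deriv_comp_sub_const _ _), deriv_comp_sub_const]
  push_cast at h ⊢
  linear_combination h

lemma psiRec_self : psiRec A k a j (j * π) = a j := by
  simp [psiRec]

lemma psiRec_succ (hks : Real.sin (k * π) ≠ 0) : psiRec A k a j ((j + 1) * π) = a (j + 1) := by
  have hs : (Real.sin (k * π) : ℂ) ≠ 0 := ofReal_ne_zero.2 hks
  have hE := exp_mul_exp_neg (I * A * π)
  simp only [psiRec_eq_gaugedWave, gaugedWave, show ((j : ℝ) + 1) * π - j * π = π by ring]
  push_cast at hs ⊢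
  simp only [mul_neg, neg_mul]
  linear_combination a (j + 1) * hE
    + exp (-(I * A * π)) * (a (j + 1) * exp (I * A * π) - a j * cos (k * π))
      * mul_inv_cancel₀ hs

lemma psiRec_succ_eq (hks : Real.sin (k * π) ≠ 0) :
    psiRec A k a j ((j + 1) * π) = psiRec A k a (j + 1) ((j + 1) * π) := by
  rw [psiRec_succ A k a j hks]
  exact_mod_cast (psiRec_self A k a (j + 1)).symm

lemma sin_mul_deriv_psiRec_sub_deriv_psiRec_pred (hks : Real.sin (k * π) ≠ 0) :
    Real.sin (k * π) * (deriv (psiRec A k a j) (j * π) - deriv (psiRec A k a (j - 1)) (j * π))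
      = k * (a (j + 1) * exp (I * A * π) + a (j - 1) * exp (-(I * A * π))
          - 2 * Real.cos (k * π) * a j) := by
  have hs : (Real.sin (k * π) : ℂ) ≠ 0 := ofReal_ne_zero.2 hks
  have hE := exp_mul_exp_neg (I * A * π)
  have htrig : (Real.sin (k * π) : ℂ) ^ 2 + (Real.cos (k * π) : ℂ) ^ 2 = 1 := by
    exact_mod_cast Real.sin_sq_add_cos_sq (k * π)
  rw [psiRec_eq_gaugedWave, psiRec_eq_gaugedWave, deriv_comp_sub_const, deriv_comp_sub_const,
    deriv_gaugedWave, deriv_gaugedWave, sub_self, gaugedWave_zero, sub_add_cancel,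
    show (j : ℝ) * π - ((j - 1 : ℤ) : ℝ) * π = π by push_cast; ring]
  simp only [gaugedWave]
  push_cast at hs htrig ⊢
  simp only [mul_neg, neg_mul]
  -- hide the exponentials from `field_simp`, which would otherwise rewrite their arguments
  generalize exp (I * A * π) = E at hE ⊢
  generalize exp (-(I * A * π)) = F at hE ⊢
  field_simp
  linear_combination k * a (j - 1) * F * htrig
    + (I * A * a j * sin (k * π) - a j * k * cos (k * π)) * hE

lemma deriv_psiRec_add_psiRec_neg_jump (hA : Real.cos (A * π) ≠ 0) (hk : k ≠ 0)
    (hks : Real.sin (k * π) ≠ 0) (α : ℝ)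
    (ha : a (j + 1) + a (j - 1)
      = 2 * (((1 / Real.cos (A * π))
          * (Real.cos (k * π) + α / (4 * k) * Real.sin (k * π)) : ℝ) : ℂ) * a j) :
    deriv (psiRec A k a j) (j * π) + deriv (psiRec (-A) k a j) (j * π)
      - deriv (psiRec A k a (j - 1)) (j * π) - deriv (psiRec (-A) k a (j - 1)) (j * π)
      = α * a j := by
  have hψjump := sin_mul_deriv_psiRec_sub_deriv_psiRec_pred A k a j hks
  have hφjump := sin_mul_deriv_psiRec_sub_deriv_psiRec_pred (-A) k a j hks
  have hcos : exp (I * A * π) + exp (-(I * A * π)) = 2 * cos (A * π) := by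
    rw [two_cos]
    ring_nf
  have hrec : (Real.cos (A * π) : ℂ) * (a (j + 1) + a (j - 1)) * (4 * k)
      = 2 * (4 * k * Real.cos (k * π) + α * Real.sin (k * π)) * a j := by
    have hc : (Real.cos (A * π) : ℂ) ≠ 0 := ofReal_ne_zero.2 hA
    have hkc : (k : ℂ) ≠ 0 := ofReal_ne_zero.2 hk
    rw [ha]
    push_cast at hc ⊢
    field_simp
  push_cast at hψjump hφjump hrec
  simp only [mul_neg, neg_mul, neg_neg] at hφjump
  apply mul_left_cancel₀ (ofReal_ne_zero.2 hks)
  push_cast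
  linear_combination hψjump + hφjump + k * (a (j + 1) + a (j - 1)) * hcos + hrec / 2

end PsiRec

namespace PiecewiseIco

variable {A k : ℝ} {a : ℤ → ℂ} {f : ℝ → ℂ}

lemma continuous_of_psiRec (hks : Real.sin (k * π) ≠ 0) (hf : PiecewiseIco π (psiRec A k a) f) :
    Continuous f :=
  hf.continuous Real.pi_pos (psiRec_succ_eq A k a · hks) fun j =>
    (differentiable_psiRec A k a j).continuous

lemma apply_int_mul_pi_of_psiRec (hf : PiecewiseIco π (psiRec A k a) f) (j : ℤ) :
    f (j * π) = a j :=
  (hf.apply_int_mul Real.pi_pos j).trans (psiRec_self A k a j)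

lemma ode_of_psiRec (hf : PiecewiseIco π (psiRec A k a) f) {j : ℤ} {x : ℝ}
    (hx : x ∈ Ioo ((j : ℝ) * π) (((j : ℝ) + 1) * π)) :
    DifferentiableAt ℝ f x ∧ DifferentiableAt ℝ (deriv f) x ∧
      deriv (deriv f) x + 2 * I * A * deriv f x + ((k ^ 2 - A ^ 2 : ℝ) : ℂ) * f x = 0 := by
  have h := hf.eventuallyEq_nhds hx
  refine ⟨h.differentiableAt_iff.2 (differentiable_psiRec A k a j x),
    h.deriv.differentiableAt_iff.2 (differentiable_deriv_psiRec A k a j x), ?_⟩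
  rw [h.deriv.deriv_eq, h.deriv_eq, h.eq_of_nhds]
  exact psiRec_ode A k a j x

end PiecewiseIco

/-- duality, converse direction.  Any solution `(a_j)` of the difference
equation `a_{j+1} + a_{j−1} = 2ξ_j(k)a_j` gives, via the explicit formulas, functions
`ψ, φ` that are continuous, take the values `a_j` at the vertices, satisfy the gauged
eigenvalue equations at energy `k²` on each interval `(jπ, (j+1)π)`, and have one-sided
derivatives at each vertex satisfying the `δ`-coupling of strength `α_j`. -/
theorem duality_converse (A : ℝ) (hA : Real.cos (A * π) ≠ 0) (k : ℝ) (hk : 0 < k)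
    (hks : Real.sin (k * π) ≠ 0) (α : ℤ → ℝ) (a : ℤ → ℂ)
    (ha : ∀ j : ℤ, a (j + 1) + a (j - 1)
      = 2 * (((1 / Real.cos (A * π))
          * (Real.cos (k * π) + α j / (4 * k) * Real.sin (k * π)) : ℝ) : ℂ) * a j)
    (ψ φ : ℝ → ℂ)
    (hψ : ∀ j : ℤ, ∀ x ∈ Set.Ico ((j : ℝ) * π) (((j : ℝ) + 1) * π), ψ x = psiRec A k a j x)
    (hφ : ∀ j : ℤ, ∀ x ∈ Set.Ico ((j : ℝ) * π) (((j : ℝ) + 1) * π), φ x = phiRec A k a j x) :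
    Continuous ψ ∧ Continuous φ ∧
    (∀ j : ℤ, ψ ((j : ℝ) * π) = a j ∧ φ ((j : ℝ) * π) = a j) ∧
    (∀ j : ℤ, ∀ x ∈ Set.Ioo ((j : ℝ) * π) (((j : ℝ) + 1) * π),
      DifferentiableAt ℝ ψ x ∧ DifferentiableAt ℝ (deriv ψ) x ∧
      deriv (deriv ψ) x + 2 * Complex.I * (A : ℂ) * deriv ψ x
        + ((k ^ 2 - A ^ 2 : ℝ) : ℂ) * ψ x = 0 ∧
      DifferentiableAt ℝ φ x ∧ DifferentiableAt ℝ (deriv φ) x ∧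
      deriv (deriv φ) x - 2 * Complex.I * (A : ℂ) * deriv φ x
        + ((k ^ 2 - A ^ 2 : ℝ) : ℂ) * φ x = 0) ∧
    (∀ j : ℤ, ∃ dψp dψm dφp dφm : ℂ,
      HasDerivWithinAt ψ dψp (Set.Ioi ((j : ℝ) * π)) ((j : ℝ) * π) ∧
      HasDerivWithinAt ψ dψm (Set.Iio ((j : ℝ) * π)) ((j : ℝ) * π) ∧
      HasDerivWithinAt φ dφp (Set.Ioi ((j : ℝ) * π)) ((j : ℝ) * π) ∧
      HasDerivWithinAt φ dφm (Set.Iio ((j : ℝ) * π)) ((j : ℝ) * π) ∧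
      dψp + dφp - dψm - dφm = (α j : ℂ) * a j) := by
  have hψ : PiecewiseIco π (psiRec A k a) ψ := hψ
  have hφ : PiecewiseIco π (psiRec (-A) k a) φ := by rwa [← phiRec_eq_psiRec_neg]
  refine ⟨hψ.continuous_of_psiRec hks, hφ.continuous_of_psiRec hks,
    fun j => ⟨hψ.apply_int_mul_pi_of_psiRec j, hφ.apply_int_mul_pi_of_psiRec j⟩,
    fun j x hx => ?_, fun j => ⟨_, _, _, _,
      hψ.hasDerivWithinAt_Ioi Real.pi_pos (differentiable_psiRec A k a) j,
      hψ.hasDerivWithinAt_Iio Real.pi_pos (psiRec_succ_eq A k a · hks)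
        (differentiable_psiRec A k a) j,
      hφ.hasDerivWithinAt_Ioi Real.pi_pos (differentiable_psiRec (-A) k a) j,
      hφ.hasDerivWithinAt_Iio Real.pi_pos (psiRec_succ_eq (-A) k a · hks)
        (differentiable_psiRec (-A) k a) j,
      deriv_psiRec_add_psiRec_neg_jump A k a j hA hk.ne' hks (α j) (ha j)⟩⟩
  obtain ⟨hψd, hψd', hψode⟩ := hψ.ode_of_psiRec hx
  obtain ⟨hφd, hφd', hφode⟩ := hφ.ode_of_psiRec hx
  refine ⟨hψd, hψd', hψode, hφd, hφd', ?_⟩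
  push_cast at hφode ⊢
  linear_combination hφode
end
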